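/- arXiv:math/0601198 — 6 statements merged into one kernel-verified Lean document; each statement's English description precedes it below -/
import Mathlib

section
/- Let Ω ⊆ ℝⁿ be an open set and let X : Ω → ℝⁿ be a C¹ vector field. Suppose there are constants b > 0 and c > 0 such that ‖X(x)‖ ≤ b and div X(x) ≥ c for every x ∈ Ω. Then for every smooth function u : ℝⁿ → ℝ with compact support contained in Ω one has c² ∫_Ω u² ≤ 4 b² ∫_Ω ‖∇u‖². Equivalently, the fundamental tone satisfies λ*(Ω) ≥ c²/(4b²). -/
open MeasureTheory Set
open scoped Manifold

/-- The divergence of a vector field on Euclidean space: the trace of its derivative. -/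
noncomputable def divergence {n : ℕ}
    (X : EuclideanSpace ℝ (Fin n) → EuclideanSpace ℝ (Fin n))
    (x : EuclideanSpace ℝ (Fin n)) : ℝ :=
  LinearMap.trace ℝ (EuclideanSpace ℝ (Fin n)) (fderiv ℝ X x).toLinearMap

lemma aux_trace {n : ℕ} (L : (EuclideanSpace ℝ (Fin n)) →L[ℝ] (EuclideanSpace ℝ (Fin n))) :
    LinearMap.trace ℝ (EuclideanSpace ℝ (Fin n)) L.toLinearMap
      = ∑ i, L (EuclideanSpace.single i 1) i := by
  rw [LinearMap.trace_eq_matrix_trace ℝ ((EuclideanSpace.basisFun (Fin n) ℝ).toBasis)]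
  simp [Matrix.trace, Matrix.diag, LinearMap.toMatrix_apply, EuclideanSpace.basisFun_apply,
    OrthonormalBasis.coe_toBasis_repr_apply, EuclideanSpace.basisFun_repr,
    OrthonormalBasis.coe_toBasis]

lemma aux_apply {n : ℕ} (L : (EuclideanSpace ℝ (Fin n)) →L[ℝ] ℝ) (w : EuclideanSpace ℝ (Fin n)) :
    L w = ∑ i, L (EuclideanSpace.single i 1) * w i := by
  conv_lhs => rw [← (EuclideanSpace.basisFun (Fin n) ℝ).sum_repr w]
  rw [map_sum]
  refine Finset.sum_congr rfl fun i _ => ?_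
  simp [EuclideanSpace.basisFun_apply, EuclideanSpace.basisFun_repr, mul_comm]

lemma aux_bump {n : ℕ} {Ω : Set (EuclideanSpace ℝ (Fin n))} (hΩ : IsOpen Ω)
    {K : Set (EuclideanSpace ℝ (Fin n))} (hK : IsCompact K) (hKΩ : K ⊆ Ω) :
    ∃ φ : EuclideanSpace ℝ (Fin n) → ℝ, ContDiff ℝ ((⊤:ℕ∞) : WithTop ℕ∞) φ ∧ HasCompactSupport φ ∧
      tsupport φ ⊆ Ω ∧ (∃ W, IsOpen W ∧ K ⊆ W ∧ ∀ x ∈ W, φ x = 1) ∧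
      ∀ x, φ x ∈ Icc (0:ℝ) 1 := by
  obtain ⟨R, hR⟩ := hK.isBounded.subset_ball 0
  set Ω' := Ω ∩ Metric.ball (0 : EuclideanSpace ℝ (Fin n)) R with hΩ'def
  have hΩ'o : IsOpen Ω' := hΩ.inter Metric.isOpen_ball
  have hKΩ' : K ⊆ Ω' := subset_inter hKΩ hR
  obtain ⟨f, h0, h1, hf01⟩ :=
    exists_contMDiffMap_zero_one_nhds_of_isClosed (𝓘(ℝ, EuclideanSpace ℝ (Fin n))) (n := (⊤:ℕ∞))
      hΩ'o.isClosed_compl hK.isClosed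
      (disjoint_left.mpr fun x hx hxK => hx (hKΩ' hxK))
  obtain ⟨V, hVo, hV1, hV0⟩ := mem_nhdsSet_iff_exists.mp h0
  obtain ⟨W, hWo, hW1, hWval⟩ := mem_nhdsSet_iff_exists.mp h1
  have hφ : ContDiff ℝ ((⊤:ℕ∞) : WithTop ℕ∞) (f : EuclideanSpace ℝ (Fin n) → ℝ) :=
    contMDiff_iff_contDiff.mp f.contMDiff
  have hsupp : tsupport (f : EuclideanSpace ℝ (Fin n) → ℝ) ⊆ Vᶜ := by
    apply closure_minimal _ hVo.isClosed_compl
    intro x hx hxV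
    exact hx (hV0 hxV)
  have hVc : Vᶜ ⊆ Ω' := fun x hx => by
    by_contra h
    exact hx (hV1 h)
  refine ⟨f, hφ, ?_, hsupp.trans (hVc.trans inter_subset_left), ⟨W, hWo, hW1, fun x hx => hWval hx⟩,
    hf01⟩
  exact IsCompact.of_isClosed_subset (isCompact_closedBall 0 R) (isClosed_tsupport _)
    (hsupp.trans (hVc.trans ((inter_subset_right).trans Metric.ball_subset_closedBall)))

/-- Bessa–Montenegro divergence lower bound for the fundamental tone. -/
theorem stmt0 {n : ℕ} (Ω : Set (EuclideanSpace ℝ (Fin n))) (hΩ : IsOpen Ω)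
    (X : EuclideanSpace ℝ (Fin n) → EuclideanSpace ℝ (Fin n))
    (hX : ContDiffOn ℝ 1 X Ω) (b c : ℝ) (hb : 0 < b) (hc : 0 < c)
    (hXnorm : ∀ x ∈ Ω, ‖X x‖ ≤ b)
    (hXdiv : ∀ x ∈ Ω, c ≤ divergence X x)
    (u : EuclideanSpace ℝ (Fin n) → ℝ) (hu : ContDiff ℝ (⊤ : ℕ∞) u)
    (husupp : HasCompactSupport u) (husub : tsupport u ⊆ Ω) :
    c ^ 2 * ∫ x in Ω, (u x) ^ 2 ≤ 4 * b ^ 2 * ∫ x in Ω, ‖gradient u x‖ ^ 2 := by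
  classical
  obtain ⟨φ, hφ, hφc, hφΩ, ⟨W, hWo, hKW, hW1⟩, hφ01⟩ := aux_bump hΩ husupp husub
  set Y : EuclideanSpace ℝ (Fin n) → EuclideanSpace ℝ (Fin n) := fun x => φ x • X x with hYdef
  -- basic smoothness facts
  have hud : Differentiable ℝ u := hu.differentiable (by simp)
  have hu2smooth : ContDiff ℝ (⊤ : ℕ∞) (fun x => u x ^ 2) := hu.pow 2
  have hu2d : Differentiable ℝ (fun x => u x ^ 2) := hu2smooth.differentiable (by simp)
  have hY : ContDiff ℝ 1 Y := by
    rw [contDiff_iff_contDiffAt]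
    intro x
    by_cases hx : x ∈ Ω
    · exact ((hφ.of_le (by exact_mod_cast le_top)).contDiffAt).smul
        (hX.contDiffAt (hΩ.mem_nhds hx))
    · have hx' : x ∉ tsupport φ := fun h => hx (hφΩ h)
      have hev : Y =ᶠ[nhds x] fun _ => 0 := by
        filter_upwards [(isClosed_tsupport φ).isOpen_compl.mem_nhds hx'] with y hy
        simp [hYdef, image_eq_zero_of_notMem_tsupport hy]
      exact (contDiffAt_const (c := 0)).congr_of_eventuallyEq hev
  have hYd : Differentiable ℝ Y := hY.differentiable one_ne_zero
  have hYc : HasCompactSupport Y := hφc.smul_right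
  -- norm bound on Y
  have hYb : ∀ x, ‖Y x‖ ≤ b := by
    intro x
    by_cases hx : x ∈ Ω
    · have h1 : |φ x| ≤ 1 := abs_le.mpr ⟨by linarith [(hφ01 x).1], (hφ01 x).2⟩
      calc ‖Y x‖ = |φ x| * ‖X x‖ := by rw [hYdef]; simp [norm_smul]
        _ ≤ 1 * b := mul_le_mul h1 (hXnorm x hx) (norm_nonneg _) zero_le_one
        _ = b := one_mul b
    · have hx' : x ∉ tsupport φ := fun h => hx (hφΩ h)
      have : φ x = 0 := image_eq_zero_of_notMem_tsupport hx'
      simp [hYdef, this, hb.le]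
  -- divergence lower bound for Y on the support of u
  have hYdiv : ∀ x ∈ tsupport u, c ≤ divergence Y x := by
    intro x hx
    have hev : Y =ᶠ[nhds x] X := by
      filter_upwards [hWo.mem_nhds (hKW hx)] with y hy
      simp [hYdef, hW1 y hy]
    have hfd : fderiv ℝ Y x = fderiv ℝ X x := hev.fderiv_eq
    simpa [divergence, hfd] using hXdiv x (husub hx)
  -- the support set
  set S : Set (EuclideanSpace ℝ (Fin n)) := tsupport u ∪ tsupport φ with hSdef
  have hScomp : IsCompact S := husupp.union hφc
  have hu0 : ∀ x ∉ S, u x = 0 := fun x hx =>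
    image_eq_zero_of_notMem_tsupport (fun h => hx (Or.inl h))
  have hY0 : ∀ x ∉ S, Y x = 0 := fun x hx => by
    have : φ x = 0 := image_eq_zero_of_notMem_tsupport (fun h => hx (Or.inr h))
    simp [hYdef, this]
  -- derivative of u^2
  have hD2 : ∀ x, HasFDerivAt (fun y => u y ^ 2) ((2 * u x) • fderiv ℝ u x) x := by
    intro x
    have h := ((hud x).hasFDerivAt.mul (hud x).hasFDerivAt)
    have heq : (fun y => u y ^ 2) = fun y => u y * u y := by funext y; ring
    rw [heq, two_mul, add_smul]
    exact h
  have hfu2 : ∀ x, fderiv ℝ (fun y => u y ^ 2) x = (2 * u x) • fderiv ℝ u x :=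
    fun x => (hD2 x).fderiv
  have hfu20 : ∀ x ∉ S, fderiv ℝ (fun y => u y ^ 2) x = 0 := by
    intro x hx
    rw [hfu2 x, hu0 x hx]
    simp
  -- integrability helper
  have mkInt : ∀ (g : EuclideanSpace ℝ (Fin n) → ℝ), Continuous g →
      (∀ x ∉ S, g x = 0) → Integrable g := fun g hg hg0 =>
    hg.integrable_of_hasCompactSupport (HasCompactSupport.intro hScomp hg0)
  have hcontD : Continuous (fderiv ℝ u) := hu.continuous_fderiv (by simp)
  have hcontD2 : Continuous (fderiv ℝ (fun y => u y ^ 2)) := hu2smooth.continuous_fderiv (by simp)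
  have hcontY' : Continuous (fderiv ℝ Y) := hY.continuous_fderiv one_ne_zero
  have hdivYcont : Continuous (fun x => divergence Y x) := by
    have hT : Continuous (fun L : (EuclideanSpace ℝ (Fin n)) →L[ℝ] (EuclideanSpace ℝ (Fin n)) =>
        LinearMap.trace ℝ (EuclideanSpace ℝ (Fin n)) L.toLinearMap) := by
      exact ((LinearMap.trace ℝ (EuclideanSpace ℝ (Fin n))).comp
        (ContinuousLinearMap.coeLM ℝ)).continuous_of_finiteDimensional
    exact hT.comp hcontY'
  -- integrable functions
  have intU2 : Integrable (fun x => u x ^ 2) := mkInt _ (hu.continuous.pow 2)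
    (fun x hx => by rw [hu0 x hx]; ring)
  have intD2 : Integrable (fun x => ‖fderiv ℝ u x‖ ^ 2) := mkInt _ (hcontD.norm.pow 2)
    (fun x hx => by
      have : fderiv ℝ u x = 0 := by
        by_contra h
        exact hx (Or.inl (support_fderiv_subset ℝ (Function.mem_support.mpr h)))
      rw [this]; simp)
  have intDiv : Integrable (fun x => u x ^ 2 * divergence Y x) := mkInt _
    ((hu.continuous.pow 2).mul hdivYcont)
    (fun x hx => by rw [hu0 x hx]; ring)
  have intFY : Integrable (fun x => fderiv ℝ (fun y => u y ^ 2) x (Y x)) := mkInt _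
    (hcontD2.clm_apply hY.continuous)
    (fun x hx => by rw [hfu20 x hx]; simp)
  -- per-coordinate facts
  have hgiF : ∀ (i : Fin n) (x : EuclideanSpace ℝ (Fin n)),
      HasFDerivAt (fun y => Y y i)
        ((EuclideanSpace.proj (𝕜 := ℝ) i).comp (fderiv ℝ Y x)) x := fun i x =>
    ((EuclideanSpace.proj (𝕜 := ℝ) i).hasFDerivAt).comp x (hYd x).hasFDerivAt
  have hfgi : ∀ (i : Fin n) (x : EuclideanSpace ℝ (Fin n)) (v : EuclideanSpace ℝ (Fin n)),
      fderiv ℝ (fun y => Y y i) x v = fderiv ℝ Y x v i := by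
    intro i x v
    rw [(hgiF i x).fderiv]
    rfl
  -- integration by parts, per coordinate
  have ibp : ∀ i : Fin n,
      ∫ x, u x ^ 2 * fderiv ℝ (fun y => Y y i) x (EuclideanSpace.single i 1)
        = - ∫ x, fderiv ℝ (fun y => u y ^ 2) x (EuclideanSpace.single i 1) * Y x i := by
    intro i
    refine integral_mul_fderiv_eq_neg_fderiv_mul_of_integrable ?_ ?_ ?_ (fun x _ => hu2d x)
      (fun x _ => (hgiF i x).differentiableAt)
    · refine mkInt _ ((hcontD2.clm_apply continuous_const).mul
        ((continuous_apply i).comp ((PiLp.continuous_ofLp 2 _).comp hY.continuous))) (fun x hx => by rw [hfu20 x hx]; simp)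
    · have hconti : Continuous (fun x => fderiv ℝ (fun y => Y y i) x (EuclideanSpace.single i 1)) := by
        have : (fun x => fderiv ℝ (fun y => Y y i) x (EuclideanSpace.single i 1))
            = fun x => fderiv ℝ Y x (EuclideanSpace.single i 1) i :=
          funext fun x => hfgi i x _
        rw [this]
        exact (continuous_apply i).comp ((PiLp.continuous_ofLp 2 _).comp (hcontY'.clm_apply continuous_const))
      refine mkInt _ ((hu.continuous.pow 2).mul hconti) (fun x hx => by rw [hu0 x hx]; ring)
    · refine mkInt _ ((hu.continuous.pow 2).mul ((continuous_apply i).comp ((PiLp.continuous_ofLp 2 _).comp hY.continuous)))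
        (fun x hx => by rw [hu0 x hx]; ring)
  -- key identity: ∫ u² div Y = - ∫ (u²)' (Y)
  have keyA : ∫ x, u x ^ 2 * divergence Y x
      = - ∫ x, fderiv ℝ (fun y => u y ^ 2) x (Y x) := by
    have e1 : ∀ x, u x ^ 2 * divergence Y x
        = ∑ i, u x ^ 2 * fderiv ℝ (fun y => Y y i) x (EuclideanSpace.single i 1) := by
      intro x
      rw [← Finset.mul_sum]
      congr 1
      rw [divergence, aux_trace]
      exact Finset.sum_congr rfl fun i _ => (hfgi i x _).symm
    have e2 : ∀ x, fderiv ℝ (fun y => u y ^ 2) x (Y x)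
        = ∑ i, fderiv ℝ (fun y => u y ^ 2) x (EuclideanSpace.single i 1) * Y x i :=
      fun x => aux_apply _ _
    have int1 : ∀ i : Fin n, Integrable
        (fun x => u x ^ 2 * fderiv ℝ (fun y => Y y i) x (EuclideanSpace.single i 1)) := by
      intro i
      have hconti : Continuous (fun x => fderiv ℝ (fun y => Y y i) x (EuclideanSpace.single i 1)) := by
        have : (fun x => fderiv ℝ (fun y => Y y i) x (EuclideanSpace.single i 1))
            = fun x => fderiv ℝ Y x (EuclideanSpace.single i 1) i :=
          funext fun x => hfgi i x _
        rw [this]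
        exact (continuous_apply i).comp ((PiLp.continuous_ofLp 2 _).comp (hcontY'.clm_apply continuous_const))
      exact mkInt _ ((hu.continuous.pow 2).mul hconti) (fun x hx => by rw [hu0 x hx]; ring)
    have int2 : ∀ i : Fin n, Integrable
        (fun x => fderiv ℝ (fun y => u y ^ 2) x (EuclideanSpace.single i 1) * Y x i) := by
      intro i
      exact mkInt _ ((hcontD2.clm_apply continuous_const).mul
        ((continuous_apply i).comp ((PiLp.continuous_ofLp 2 _).comp hY.continuous))) (fun x hx => by rw [hfu20 x hx]; simp)
    calc ∫ x, u x ^ 2 * divergence Y x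
        = ∫ x, ∑ i, u x ^ 2 * fderiv ℝ (fun y => Y y i) x (EuclideanSpace.single i 1) := by
          exact integral_congr_ae (Filter.Eventually.of_forall e1)
      _ = ∑ i, ∫ x, u x ^ 2 * fderiv ℝ (fun y => Y y i) x (EuclideanSpace.single i 1) :=
          integral_finset_sum _ (fun i _ => int1 i)
      _ = ∑ i, - ∫ x, fderiv ℝ (fun y => u y ^ 2) x (EuclideanSpace.single i 1) * Y x i :=
          Finset.sum_congr rfl fun i _ => ibp i
      _ = - ∑ i, ∫ x, fderiv ℝ (fun y => u y ^ 2) x (EuclideanSpace.single i 1) * Y x i := by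
          rw [Finset.sum_neg_distrib]
      _ = - ∫ x, ∑ i, fderiv ℝ (fun y => u y ^ 2) x (EuclideanSpace.single i 1) * Y x i := by
          rw [integral_finset_sum _ (fun i _ => int2 i)]
      _ = - ∫ x, fderiv ℝ (fun y => u y ^ 2) x (Y x) := by
          congr 1
          exact integral_congr_ae (Filter.Eventually.of_forall (fun x => (e2 x).symm))
  -- lower bound
  have keyB : c * ∫ x, u x ^ 2 ≤ ∫ x, u x ^ 2 * divergence Y x := by
    rw [← integral_const_mul]
    refine integral_mono (intU2.const_mul c) intDiv (fun x => ?_)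
    by_cases hx : u x = 0
    · simp [hx]
    · have hxs : x ∈ tsupport u := subset_closure (Function.mem_support.mpr hx)
      have := hYdiv x hxs
      nlinarith [sq_nonneg (u x)]
  -- upper bound
  have keyC : ∫ x, -(fderiv ℝ (fun y => u y ^ 2) x (Y x))
      ≤ ∫ x, (c/2 * u x ^ 2 + (2*b^2/c) * ‖fderiv ℝ u x‖ ^ 2) := by
    refine integral_mono intFY.neg ((intU2.const_mul _).add (intD2.const_mul _)) (fun x => ?_)
    have habs : |fderiv ℝ (fun y => u y ^ 2) x (Y x)|
        ≤ 2 * |u x| * (‖fderiv ℝ u x‖ * b) := by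
      rw [hfu2 x]
      simp only [ContinuousLinearMap.coe_smul', Pi.smul_apply, smul_eq_mul, abs_mul, abs_two]
      have h1 : |fderiv ℝ u x (Y x)| ≤ ‖fderiv ℝ u x‖ * b := by
        calc |fderiv ℝ u x (Y x)| = ‖fderiv ℝ u x (Y x)‖ := (Real.norm_eq_abs _).symm
          _ ≤ ‖fderiv ℝ u x‖ * ‖Y x‖ := (fderiv ℝ u x).le_opNorm (Y x)
          _ ≤ ‖fderiv ℝ u x‖ * b := by
              exact mul_le_mul_of_nonneg_left (hYb x) (norm_nonneg _)
      exact mul_le_mul_of_nonneg_left h1 (by positivity)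
    have h2 : 2 * |u x| * (‖fderiv ℝ u x‖ * b)
        ≤ c/2 * u x ^ 2 + (2*b^2/c) * ‖fderiv ℝ u x‖ ^ 2 := by
      have hsq : |u x| ^ 2 = u x ^ 2 := sq_abs (u x)
      have key : 0 ≤ (c * |u x| - 2 * b * ‖fderiv ℝ u x‖) ^ 2 := sq_nonneg _
      have habsn : (0:ℝ) ≤ |u x| := abs_nonneg _
      have hnn : (0:ℝ) ≤ ‖fderiv ℝ u x‖ := norm_nonneg _
      rw [← mul_le_mul_iff_of_pos_left hc]
      have hexp : c * (c/2 * u x ^ 2 + (2*b^2/c) * ‖fderiv ℝ u x‖ ^ 2)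
          = c^2/2 * u x ^ 2 + 2*b^2 * ‖fderiv ℝ u x‖ ^ 2 := by
        field_simp
      rw [hexp]
      nlinarith [sq_nonneg (c * |u x| - 2 * b * ‖fderiv ℝ u x‖), mul_pos hb hc]
    calc -(fderiv ℝ (fun y => u y ^ 2) x (Y x)) ≤ |fderiv ℝ (fun y => u y ^ 2) x (Y x)| :=
          neg_le_abs _
      _ ≤ 2 * |u x| * (‖fderiv ℝ u x‖ * b) := habs
      _ ≤ c/2 * u x ^ 2 + (2*b^2/c) * ‖fderiv ℝ u x‖ ^ 2 := h2
  -- put everything together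
  have hmain : c * ∫ x, u x ^ 2
      ≤ c/2 * (∫ x, u x ^ 2) + (2*b^2/c) * ∫ x, ‖fderiv ℝ u x‖ ^ 2 := by
    have h1 := keyB
    rw [keyA] at h1
    rw [integral_neg] at keyC
    have h2 := le_trans h1 keyC
    rwa [integral_add (intU2.const_mul _) (intD2.const_mul _), integral_const_mul,
      integral_const_mul] at h2
  -- convert set integrals
  have hsetU : ∫ x in Ω, u x ^ 2 = ∫ x, u x ^ 2 := by
    refine setIntegral_eq_integral_of_forall_compl_eq_zero (fun x hx => ?_)
    have : u x = 0 := image_eq_zero_of_notMem_tsupport (fun h => hx (husub h))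
    rw [this]; ring
  have hgradnorm : ∀ x, ‖gradient u x‖ = ‖fderiv ℝ u x‖ := by
    intro x
    rw [gradient]
    exact LinearIsometryEquiv.norm_map _ _
  have hsetG : ∫ x in Ω, ‖gradient u x‖ ^ 2 = ∫ x, ‖fderiv ℝ u x‖ ^ 2 := by
    have e : ∀ x, ‖gradient u x‖ ^ 2 = ‖fderiv ℝ u x‖ ^ 2 := fun x => by rw [hgradnorm x]
    rw [show (fun x => ‖gradient u x‖ ^ 2) = fun x => ‖fderiv ℝ u x‖ ^ 2 from funext e]
    refine setIntegral_eq_integral_of_forall_compl_eq_zero (fun x hx => ?_)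
    have : fderiv ℝ u x = 0 := by
      by_contra h
      exact hx (husub (support_fderiv_subset ℝ (Function.mem_support.mpr h)))
    rw [this]; simp
  rw [hsetU, hsetG]
  have hAB : c/2 * (∫ x, u x ^ 2) ≤ 2*b^2/c * ∫ x, ‖fderiv ℝ u x‖ ^ 2 := by
    linarith [hmain]
  calc c ^ 2 * ∫ x, u x ^ 2 = 2*c*(c/2 * ∫ x, u x ^ 2) := by ring
    _ ≤ 2*c*(2*b^2/c * ∫ x, ‖fderiv ℝ u x‖ ^ 2) := mul_le_mul_of_nonneg_left hAB (by positivity)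
    _ = 4 * b ^ 2 * ∫ x, ‖fderiv ℝ u x‖ ^ 2 := by field_simp; ring
end

section
/- Let Ω ⊆ ℝⁿ be a connected open set and let η : Ω → ℝⁿ be a C¹ vector field with ‖η(x)‖ = 1 for all x ∈ Ω (a unit normal field to a transversally oriented codimension-one C² foliation of Ω, so that div η(x) equals the mean curvature of the leaf through x). If there is c > 0 with |div η(x)| ≥ c for all x ∈ Ω, then for every smooth function u : ℝⁿ → ℝ with compact support contained in Ω one has c² ∫_Ω u² ≤ 4 ∫_Ω ‖∇u‖². Equivalently, 2 √(λ*(Ω)) ≥ inf_{x∈Ω} |div η(x)|. -/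
open MeasureTheory

lemma trace_smulRight' {E : Type*} [AddCommGroup E] [Module ℝ E]
    [Module.Free ℝ E] [Module.Finite ℝ E] (ℓ : E →ₗ[ℝ] ℝ) (v : E) :
    LinearMap.trace ℝ E (ℓ.smulRight v) = ℓ v := by
  have h : ℓ.smulRight v = dualTensorHom ℝ E E (ℓ ⊗ₜ v) := by
    ext x; simp [dualTensorHom_apply]
  rw [h, LinearMap.trace_eq_contract_apply, contractLeft_apply]

lemma divergence_eq_sum {n : ℕ} (X : EuclideanSpace ℝ (Fin n) → EuclideanSpace ℝ (Fin n))
    (x : EuclideanSpace ℝ (Fin n)) :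
    divergence X x = ∑ i, fderiv ℝ X x ((EuclideanSpace.basisFun (Fin n) ℝ).toBasis i) i := by
  rw [divergence, LinearMap.trace_eq_matrix_trace ℝ (EuclideanSpace.basisFun (Fin n) ℝ).toBasis]
  simp [Matrix.trace, Matrix.diag, LinearMap.toMatrix_apply]

lemma integral_divergence_zero {n : ℕ} (X : EuclideanSpace ℝ (Fin n) → EuclideanSpace ℝ (Fin n))
    (hX : ContDiff ℝ 1 X) (hsupp : HasCompactSupport X) :
    ∫ x, divergence X x = 0 := by
  have hXd : Differentiable ℝ X := hX.differentiable one_ne_zero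
  have hfc : Continuous (fderiv ℝ X) := hX.continuous_fderiv one_ne_zero
  have hfs : HasCompactSupport (fderiv ℝ X) := hsupp.fderiv (𝕜 := ℝ)
  have key : ∀ i : Fin n,
      (∫ x, fderiv ℝ X x ((EuclideanSpace.basisFun (Fin n) ℝ).toBasis i) i) = 0 := by
    intro i
    set v := (EuclideanSpace.basisFun (Fin n) ℝ).toBasis i with hv
    set g : EuclideanSpace ℝ (Fin n) → ℝ := fun x => X x i with hg
    have hgd : Differentiable ℝ g := fun x =>
      ((EuclideanSpace.proj (𝕜 := ℝ) i).differentiableAt).comp x (hXd x)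
    have hgder : ∀ x w, fderiv ℝ g x w = fderiv ℝ X x w i := by
      intro x w
      have h2 : fderiv ℝ g x = (EuclideanSpace.proj (𝕜 := ℝ) i).comp (fderiv ℝ X x) :=
        ((EuclideanSpace.proj (𝕜 := ℝ) i).hasFDerivAt.comp x (hXd x).hasFDerivAt).fderiv
      rw [h2]; rfl
    have hcg' : Continuous fun x => fderiv ℝ g x v := by
      have : Continuous fun x => fderiv ℝ X x v i := by
        exact ((EuclideanSpace.proj (𝕜 := ℝ) i).continuous).comp
          (hfc.clm_apply continuous_const)
      exact this.congr fun x => (hgder x v).symm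
    have hsg' : HasCompactSupport fun x => fderiv ℝ g x v := by
      apply HasCompactSupport.intro hsupp
      intro x hx
      have hz : fderiv ℝ X x = 0 :=
        image_eq_zero_of_notMem_tsupport (fun hmem => hx (tsupport_fderiv_subset ℝ hmem))
      rw [hgder, hz]; rfl
    have hg_int : Integrable g := by
      refine Continuous.integrable_of_hasCompactSupport
        (((EuclideanSpace.proj (𝕜 := ℝ) i).continuous).comp hX.continuous) ?_
      apply HasCompactSupport.intro hsupp
      intro x hx
      simp [hg, image_eq_zero_of_notMem_tsupport hx]
    have := integral_mul_fderiv_eq_neg_fderiv_mul_of_integrable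
      (μ := (volume : Measure (EuclideanSpace ℝ (Fin n))))
      (f := fun _ => (1:ℝ)) (g := g) (v := v)
      ?_ ?_ ?_ (fun x _ => differentiableAt_const (1:ℝ)) (fun x _ => hgd x)
    · have hleft : (∫ x, (1:ℝ) * fderiv ℝ g x v) = ∫ x, fderiv ℝ X x v i := by
        congr 1; ext x; rw [one_mul, hgder]
      have hright : (∫ x, fderiv ℝ (fun _ => (1:ℝ)) x v * g x) = 0 := by
        simp
      rw [hleft, hright, neg_zero] at this
      exact this
    · apply (integrable_zero _ _ _).congr
      filter_upwards with x
      simp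
    · exact (hcg'.integrable_of_hasCompactSupport hsg').congr
        (Filter.Eventually.of_forall fun x => (one_mul _).symm)
    · exact hg_int.congr (Filter.Eventually.of_forall fun x => (one_mul _).symm)
  calc ∫ x, divergence X x
      = ∫ x, ∑ i, fderiv ℝ X x ((EuclideanSpace.basisFun (Fin n) ℝ).toBasis i) i := by
        congr 1; ext x; exact divergence_eq_sum X x
    _ = ∑ i, ∫ x, fderiv ℝ X x ((EuclideanSpace.basisFun (Fin n) ℝ).toBasis i) i := by
        apply integral_finset_sum
        intro i _
        refine Continuous.integrable_of_hasCompactSupport ?_ ?_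
        · exact ((EuclideanSpace.proj (𝕜 := ℝ) i).continuous).comp
            (hfc.clm_apply continuous_const)
        · apply HasCompactSupport.intro hfs
          intro x hx
          have : fderiv ℝ X x = 0 := image_eq_zero_of_notMem_tsupport hx
          rw [this]; rfl
    _ = 0 := Finset.sum_eq_zero fun i _ => key i

set_option maxHeartbeats 1000000 in
/-- Chern–Heinz inequality for foliations (Theorem 1.1 of the paper, Euclidean ambient):
a unit normal field `η` to a transversally oriented codimension-one foliation whose
mean curvature `div η` is bounded away from zero forces a lower bound on the
fundamental tone of `Ω`. -/
theorem stmt1 {n : ℕ} (Ω : Set (EuclideanSpace ℝ (Fin n))) (hΩ : IsOpen Ω)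
    (hconn : IsConnected Ω)
    (η : EuclideanSpace ℝ (Fin n) → EuclideanSpace ℝ (Fin n))
    (hη : ContDiffOn ℝ 1 η Ω) (hunit : ∀ x ∈ Ω, ‖η x‖ = 1)
    (c : ℝ) (hc : 0 < c)
    (hdiv : ∀ x ∈ Ω, c ≤ |divergence η x|)
    (u : EuclideanSpace ℝ (Fin n) → ℝ) (hu : ContDiff ℝ (⊤ : ℕ∞) u)
    (husupp : HasCompactSupport u) (husub : tsupport u ⊆ Ω) :
    c ^ 2 * ∫ x in Ω, (u x) ^ 2 ≤ 4 * ∫ x in Ω, ‖gradient u x‖ ^ 2 := by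
  -- trace as continuous linear functional
  set T : (EuclideanSpace ℝ (Fin n) →L[ℝ] EuclideanSpace ℝ (Fin n)) →ₗ[ℝ] ℝ :=
    (LinearMap.trace ℝ (EuclideanSpace ℝ (Fin n))).comp (ContinuousLinearMap.coeLM ℝ) with hT
  have hTcont : Continuous T := T.continuous_of_finiteDimensional
  have hdivT : ∀ (Y : EuclideanSpace ℝ (Fin n) → EuclideanSpace ℝ (Fin n))
      (x : EuclideanSpace ℝ (Fin n)), divergence Y x = T (fderiv ℝ Y x) := fun Y x => rfl
  -- basic facts about u
  have hud : Differentiable ℝ u := hu.differentiable (by simp)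
  have huc : Continuous u := hu.continuous
  have hufc : Continuous (fderiv ℝ u) := hu.continuous_fderiv (by simp)
  have hzeroK : ∀ x ∉ tsupport u, u x = 0 := fun x hx => image_eq_zero_of_notMem_tsupport hx
  have hzeroΩ : ∀ x ∉ Ω, u x = 0 := fun x hx => hzeroK x (fun h => hx (husub h))
  have huev : ∀ x ∉ tsupport u, (u =ᶠ[nhds x] fun _ => 0) := by
    intro x hx
    filter_upwards [(isClosed_tsupport u).isOpen_compl.mem_nhds hx] with y hy
    exact hzeroK y hy
  have hfderiv0 : ∀ x ∉ tsupport u, fderiv ℝ u x = 0 := by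
    intro x hx
    rw [(huev x hx).fderiv_eq]
    exact fderiv_const_apply 0
  have hgrad : ∀ x, ‖gradient u x‖ = ‖fderiv ℝ u x‖ := by
    intro x; unfold gradient; exact LinearIsometryEquiv.norm_map _ _
  -- the vector field X = u² • η
  set X : EuclideanSpace ℝ (Fin n) → EuclideanSpace ℝ (Fin n) := fun x => u x ^ 2 • η x with hX
  have hXsm : ContDiff ℝ 1 X := by
    rw [contDiff_iff_contDiffAt]
    intro x
    by_cases hx : x ∈ Ω
    · exact ((hu.contDiffAt.of_le (by simp)).pow 2).smul (hη.contDiffAt (hΩ.mem_nhds hx))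
    · have hx' : x ∉ tsupport u := fun h => hx (husub h)
      apply ContDiffAt.congr_of_eventuallyEq (contDiffAt_const (c := (0 : EuclideanSpace ℝ (Fin n))))
      filter_upwards [huev x hx'] with y hy
      simp [hX, hy]
  have hXsupp : HasCompactSupport X := by
    apply HasCompactSupport.intro husupp
    intro x hx
    simp [hX, hzeroK x hx]
  -- g₁ and g₂
  set g₁ : EuclideanSpace ℝ (Fin n) → ℝ := fun x => u x ^ 2 * divergence η x with hg₁
  set g₂ : EuclideanSpace ℝ (Fin n) → ℝ := fun x => 2 * u x * fderiv ℝ u x (η x) with hg₂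
  have hpow : ∀ x, fderiv ℝ (fun y => u y ^ 2) x = (2 * u x) • fderiv ℝ u x := by
    intro x
    have h1 : (fun y => u y ^ 2) = fun y => u y * u y := by ext y; ring
    rw [h1, fderiv_fun_mul (hud x) (hud x)]
    ext w
    simp [two_mul, add_smul, mul_comm]
    ring
  have hdivX : ∀ x, divergence X x = g₁ x + g₂ x := by
    intro x
    by_cases hx : x ∈ Ω
    · have hηd : DifferentiableAt ℝ η x :=
        (hη.contDiffAt (hΩ.mem_nhds hx)).differentiableAt one_ne_zero
      have hcd : DifferentiableAt ℝ (fun y => u y ^ 2) x := (hud x).pow 2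
      have hXf : fderiv ℝ X x = u x ^ 2 • fderiv ℝ η x
          + (fderiv ℝ (fun y => u y ^ 2) x).smulRight (η x) := fderiv_smul hcd hηd
      rw [hdivT, hXf, map_add, LinearMap.map_smul]
      have h2 : T ((fderiv ℝ (fun y => u y ^ 2) x).smulRight (η x))
          = fderiv ℝ (fun y => u y ^ 2) x (η x) := by
        rw [hT]
        simp only [LinearMap.comp_apply, ContinuousLinearMap.coeLM_apply]
        rw [show ((fderiv ℝ (fun y => u y ^ 2) x).smulRight (η x) :
              EuclideanSpace ℝ (Fin n) →ₗ[ℝ] EuclideanSpace ℝ (Fin n))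
            = ((fderiv ℝ (fun y => u y ^ 2) x :
              EuclideanSpace ℝ (Fin n) →ₗ[ℝ] ℝ)).smulRight (η x) from rfl]
        exact trace_smulRight' _ _
      rw [h2, hpow x]
      simp only [hg₁, hg₂, smul_eq_mul, ContinuousLinearMap.coe_smul', Pi.smul_apply]
      rw [show T (fderiv ℝ η x) = divergence η x from (hdivT η x).symm]
    · have hx' : x ∉ tsupport u := fun h => hx (husub h)
      have hXev : X =ᶠ[nhds x] fun _ => (0 : EuclideanSpace ℝ (Fin n)) := by
        filter_upwards [huev x hx'] with y hy
        simp [hX, hy]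
      have hXf : fderiv ℝ X x = 0 := by
        rw [hXev.fderiv_eq]; exact fderiv_const_apply 0
      rw [hdivT, hXf]
      simp [hg₁, hg₂, hzeroK x hx']
  -- continuity and integrability of g₂
  have hg₂cont : Continuous g₂ := by
    rw [continuous_iff_continuousAt]
    intro x
    by_cases hx : x ∈ Ω
    · have hηc : ContinuousAt η x := (hη.contDiffAt (hΩ.mem_nhds hx)).continuousAt
      exact ((continuous_const.mul huc).continuousAt).mul
        (ContinuousAt.comp (g := fun p : (EuclideanSpace ℝ (Fin n) →L[ℝ] ℝ) × EuclideanSpace ℝ (Fin n) => p.1 p.2)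
          (f := fun y => (fderiv ℝ u y, η y)) (isBoundedBilinearMap_apply.continuous.continuousAt)
          ((hufc.continuousAt).prodMk hηc))
    · have hx' : x ∉ tsupport u := fun h => hx (husub h)
      have hev : g₂ =ᶠ[nhds x] fun _ => 0 := by
        filter_upwards [huev x hx'] with y hy
        simp [hg₂, hy]
      exact ContinuousAt.congr continuousAt_const hev.symm
  have hg₂supp : HasCompactSupport g₂ := by
    apply HasCompactSupport.intro husupp
    intro x hx
    simp [hg₂, hzeroK x hx]
  have hg₂int : Integrable g₂ := hg₂cont.integrable_of_hasCompactSupport hg₂supp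
  -- integrability of divergence X
  have hdivXcont : Continuous (divergence X) := by
    have : Continuous fun x => T (fderiv ℝ X x) :=
      hTcont.comp (hXsm.continuous_fderiv one_ne_zero)
    exact this.congr fun x => (hdivT X x).symm
  have hdivXsupp : HasCompactSupport (divergence X) := by
    apply HasCompactSupport.intro (hXsupp.fderiv (𝕜 := ℝ))
    intro x hx
    have : fderiv ℝ X x = 0 := image_eq_zero_of_notMem_tsupport hx
    rw [hdivT, this, map_zero]
  have hdivXint : Integrable (divergence X) :=
    hdivXcont.integrable_of_hasCompactSupport hdivXsupp
  have hg₁int : Integrable g₁ := by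
    have : Integrable (fun x => divergence X x - g₂ x) := hdivXint.sub hg₂int
    apply this.congr
    filter_upwards with x
    rw [hdivX x]; ring
  -- ∫ g₁ = - ∫ g₂
  have hzero : (∫ x, divergence X x) = 0 := integral_divergence_zero X hXsm hXsupp
  have hg₁g₂ : (∫ x, g₁ x) = - ∫ x, g₂ x := by
    have h1 : (∫ x, divergence X x) = (∫ x, g₁ x) + ∫ x, g₂ x := by
      rw [← integral_add hg₁int hg₂int]
      congr 1; ext x; exact hdivX x
    rw [h1] at hzero
    linarith
  -- more integrability
  have hu2supp : HasCompactSupport (fun x => u x ^ 2) := by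
    apply HasCompactSupport.intro husupp
    intro x hx; simp [hzeroK x hx]
  have hu2int : Integrable (fun x => u x ^ 2) :=
    (huc.pow 2).integrable_of_hasCompactSupport hu2supp
  have hB2int : Integrable (fun x => ‖gradient u x‖ ^ 2) := by
    refine Continuous.integrable_of_hasCompactSupport ?_ ?_
    · have : Continuous fun x => ‖fderiv ℝ u x‖ ^ 2 := (hufc.norm).pow 2
      exact this.congr fun x => by rw [hgrad]
    · apply HasCompactSupport.intro (husupp.fderiv (𝕜 := ℝ))
      intro x hx
      have : fderiv ℝ u x = 0 := image_eq_zero_of_notMem_tsupport hx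
      rw [hgrad, this]; simp
  -- set-integral to full integral conversions
  have hA : (∫ x in Ω, u x ^ 2) = ∫ x, u x ^ 2 :=
    setIntegral_eq_integral_of_forall_compl_eq_zero fun x hx => by rw [hzeroΩ x hx]; ring
  have hB : (∫ x in Ω, ‖gradient u x‖ ^ 2) = ∫ x, ‖gradient u x‖ ^ 2 := by
    apply setIntegral_eq_integral_of_forall_compl_eq_zero
    intro x hx
    have hx' : x ∉ tsupport u := fun h => hx (husub h)
    rw [hgrad, hfderiv0 x hx']; simp
  set A := ∫ x, u x ^ 2 with hAdef
  set B := ∫ x, ‖gradient u x‖ ^ 2 with hBdef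
  have hApos : 0 ≤ A := integral_nonneg fun x => sq_nonneg _
  -- constant sign of divergence η on Ω
  have hcontdiv : ContinuousOn (divergence η) Ω := by
    have : ContinuousOn (fun x => T (fderiv ℝ η x)) Ω :=
      hTcont.comp_continuousOn (hη.continuousOn_fderiv_of_isOpen hΩ le_rfl)
    exact this.congr fun x _ => hdivT η x
  have hsign : (∀ x ∈ Ω, c ≤ divergence η x) ∨ (∀ x ∈ Ω, divergence η x ≤ -c) := by
    have hU : IsOpen (Ω ∩ divergence η ⁻¹' Set.Ioi 0) :=
      hcontdiv.isOpen_inter_preimage hΩ isOpen_Ioi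
    have hV : IsOpen (Ω ∩ divergence η ⁻¹' Set.Iio 0) :=
      hcontdiv.isOpen_inter_preimage hΩ isOpen_Iio
    have hdisj : Disjoint (Ω ∩ divergence η ⁻¹' Set.Ioi 0) (Ω ∩ divergence η ⁻¹' Set.Iio 0) := by
      rw [Set.disjoint_iff]
      rintro x ⟨⟨-, h1⟩, ⟨-, h2⟩⟩
      have h1' : (0:ℝ) < divergence η x := h1
      have h2' : divergence η x < 0 := h2
      linarith
    have hcover : Ω ⊆ (Ω ∩ divergence η ⁻¹' Set.Ioi 0) ∪ (Ω ∩ divergence η ⁻¹' Set.Iio 0) := by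
      intro x hx
      have := hdiv x hx
      rcases lt_trichotomy (divergence η x) 0 with h | h | h
      · exact Or.inr ⟨hx, h⟩
      · rw [h] at this; simp at this; linarith
      · exact Or.inl ⟨hx, h⟩
    rcases hconn.isPreconnected.subset_or_subset hU hV hdisj hcover with h | h
    · left
      intro x hx
      have hpos : (0:ℝ) < divergence η x := (h hx).2
      have := hdiv x hx
      rwa [abs_of_pos hpos] at this
    · right
      intro x hx
      have hneg : divergence η x < (0:ℝ) := (h hx).2
      have := hdiv x hx
      rw [abs_of_neg hneg] at this
      linarith
  -- step 1: c * A ≤ |∫ g₁|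
  have step1 : c * A ≤ |∫ x, g₁ x| := by
    rcases hsign with hpos | hneg
    · have hmono : (∫ x, c * u x ^ 2) ≤ ∫ x, g₁ x := by
        apply integral_mono (hu2int.const_mul c) hg₁int
        intro x
        by_cases hx : x ∈ Ω
        · have h1 : c * u x ^ 2 ≤ divergence η x * u x ^ 2 :=
            mul_le_mul_of_nonneg_right (hpos x hx) (sq_nonneg _)
          simpa [hg₁, mul_comm] using h1
        · simp [hg₁, hzeroΩ x hx]
      calc c * A = ∫ x, c * u x ^ 2 := (integral_const_mul c _).symm
        _ ≤ ∫ x, g₁ x := hmono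
        _ ≤ |∫ x, g₁ x| := le_abs_self _
    · have hmono : (∫ x, c * u x ^ 2) ≤ ∫ x, (-g₁ x) := by
        apply integral_mono (hu2int.const_mul c) hg₁int.neg
        intro x
        by_cases hx : x ∈ Ω
        · have h1 : c * u x ^ 2 ≤ (-divergence η x) * u x ^ 2 := by
            apply mul_le_mul_of_nonneg_right _ (sq_nonneg _)
            linarith [hneg x hx]
          simpa [hg₁, mul_comm] using h1
        · simp [hg₁, hzeroΩ x hx]
      calc c * A = ∫ x, c * u x ^ 2 := (integral_const_mul c _).symm
        _ ≤ ∫ x, (-g₁ x) := hmono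
        _ = -∫ x, g₁ x := integral_neg _
        _ ≤ |∫ x, g₁ x| := neg_le_abs _
  -- step 2: c * |∫ g₂| ≤ (c²/2) A + 2 B
  have hpt : ∀ x, c * |g₂ x| ≤ c ^ 2 / 2 * u x ^ 2 + 2 * ‖gradient u x‖ ^ 2 := by
    intro x
    by_cases hx : x ∈ Ω
    · have hbound : |fderiv ℝ u x (η x)| ≤ ‖gradient u x‖ := by
        calc |fderiv ℝ u x (η x)| ≤ ‖fderiv ℝ u x‖ * ‖η x‖ :=
              (fderiv ℝ u x).le_opNorm (η x)
          _ = ‖fderiv ℝ u x‖ := by rw [hunit x hx, mul_one]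
          _ = ‖gradient u x‖ := (hgrad x).symm
      have habs : |g₂ x| ≤ 2 * |u x| * ‖gradient u x‖ := by
        rw [hg₂]
        simp only [abs_mul, abs_two]
        exact mul_le_mul_of_nonneg_left hbound (by positivity)
      have h1 : c * |g₂ x| ≤ c * (2 * |u x| * ‖gradient u x‖) :=
        mul_le_mul_of_nonneg_left habs hc.le
      have h2 : c * (2 * |u x| * ‖gradient u x‖)
          ≤ c ^ 2 / 2 * u x ^ 2 + 2 * ‖gradient u x‖ ^ 2 := by
        nlinarith [sq_nonneg (c * |u x| - 2 * ‖gradient u x‖), sq_abs (u x),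
          abs_nonneg (u x), norm_nonneg (gradient u x), hc]
      linarith
    · have : g₂ x = 0 := by simp [hg₂, hzeroΩ x hx]
      rw [this]
      simp only [abs_zero, mul_zero]
      positivity
  have step2 : c * |∫ x, g₂ x| ≤ c ^ 2 / 2 * A + 2 * B := by
    have h1 : |∫ x, g₂ x| ≤ ∫ x, |g₂ x| := by
      simpa [Real.norm_eq_abs] using norm_integral_le_integral_norm g₂
    have h2 : c * |∫ x, g₂ x| ≤ ∫ x, c * |g₂ x| := by
      rw [integral_const_mul]
      exact mul_le_mul_of_nonneg_left h1 hc.le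
    have h3 : (∫ x, c * |g₂ x|) ≤ ∫ x, (c ^ 2 / 2 * u x ^ 2 + 2 * ‖gradient u x‖ ^ 2) := by
      apply integral_mono (hg₂int.abs.const_mul c)
        ((hu2int.const_mul _).add (hB2int.const_mul _)) hpt
    have h4 : (∫ x, (c ^ 2 / 2 * u x ^ 2 + 2 * ‖gradient u x‖ ^ 2))
        = c ^ 2 / 2 * A + 2 * B := by
      rw [integral_add (hu2int.const_mul _) (hB2int.const_mul _),
        integral_const_mul, integral_const_mul]
    linarith
  -- combine
  have hfinal : c ^ 2 * A ≤ c ^ 2 / 2 * A + 2 * B := by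
    have h1 : c * (c * A) ≤ c * |∫ x, g₁ x| := mul_le_mul_of_nonneg_left step1 hc.le
    rw [hg₁g₂, abs_neg] at h1
    nlinarith [step2]
  rw [hA, hB]
  linarith
end

section
/- Let Ω ⊆ ℝⁿ be a connected open set and f : Ω → ℝ a C² function. Set W = √(1+‖∇f‖²) and H_f = div(∇f/W) (n times the mean curvature of the graph of f with respect to the upward normal). If there is c > 0 such that |H_f(x)| ≥ c for all x ∈ Ω, then for every smooth function u : ℝⁿ → ℝ with compact support contained in Ω one has c² ∫_Ω u² ≤ 4 ∫_Ω ‖∇u‖². Equivalently, inf_Ω |H_f| ≤ 2 √(λ*(Ω)). -/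
open MeasureTheory

/-- `W = √(1 + ‖∇f‖²)`. -/
noncomputable def Wgraph {n : ℕ} (f : EuclideanSpace ℝ (Fin n) → ℝ)
    (x : EuclideanSpace ℝ (Fin n)) : ℝ :=
  Real.sqrt (1 + ‖gradient f x‖ ^ 2)

/-- The unnormalized mean curvature of the graph of `f`: `H_f = div (∇f / W)`. -/
noncomputable def meanCurvGraph {n : ℕ} (f : EuclideanSpace ℝ (Fin n) → ℝ)
    (x : EuclideanSpace ℝ (Fin n)) : ℝ :=
  divergence (fun y => (Wgraph f y)⁻¹ • gradient f y) x

section Aux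

open InnerProductSpace Set Topology

variable {n : ℕ}

private lemma trace_eq_sum_coord (A : EuclideanSpace ℝ (Fin n) →L[ℝ] EuclideanSpace ℝ (Fin n)) :
    LinearMap.trace ℝ (EuclideanSpace ℝ (Fin n)) A.toLinearMap
      = ∑ i, A (EuclideanSpace.basisFun (Fin n) ℝ i) i := by
  rw [LinearMap.trace_eq_matrix_trace ℝ (EuclideanSpace.basisFun (Fin n) ℝ).toBasis, Matrix.trace]
  simp [LinearMap.toMatrix_apply, Matrix.diag]

private lemma sum_coord_apply (ℓ : EuclideanSpace ℝ (Fin n) →L[ℝ] ℝ) (v : EuclideanSpace ℝ (Fin n)) :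
    ∑ i, ℓ (EuclideanSpace.basisFun (Fin n) ℝ i) * v i = ℓ v := by
  conv_rhs => rw [← (EuclideanSpace.basisFun (Fin n) ℝ).sum_repr v]
  simp [mul_comm]

private lemma glue_continuous {F : Type*} [NormedAddCommGroup F]
    {φ : EuclideanSpace ℝ (Fin n) → F} {U K : Set (EuclideanSpace ℝ (Fin n))}
    (hU : IsOpen U) (hK : IsClosed K) (hKU : K ⊆ U)
    (h1 : ContinuousOn φ U) (h0 : ∀ x ∉ K, φ x = 0) : Continuous φ := by
  rw [continuous_iff_continuousAt]
  intro x
  by_cases hx : x ∈ U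
  · exact h1.continuousAt (hU.mem_nhds hx)
  · have hxK : x ∈ Kᶜ := fun h => hx (hKU h)
    have hev : φ =ᶠ[nhds x] fun _ => 0 := by
      filter_upwards [hK.isOpen_compl.mem_nhds hxK] with y hy using h0 y hy
    exact ContinuousAt.congr continuousAt_const hev.symm

private lemma integral_fd_zero (g : EuclideanSpace ℝ (Fin n) → ℝ) (v : EuclideanSpace ℝ (Fin n))
    (hg : Differentiable ℝ g) (h1 : Integrable g)
    (h2 : Integrable (fun x => fderiv ℝ g x v)) : ∫ x, fderiv ℝ g x v = 0 := by
  have := integral_mul_fderiv_eq_neg_fderiv_mul_of_integrable (μ := volume)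
    (f := fun _ : EuclideanSpace ℝ (Fin n) => (1:ℝ)) (g := g) (v := v) ?_ ?_ ?_
    (fun x _ => differentiableAt_const 1) (fun x _ => hg x)
  · simp only [fderiv_fun_const, ContinuousLinearMap.zero_apply, Pi.zero_apply, zero_mul,
      integral_zero, neg_zero, one_mul] at this
    simpa using this
  · simpa [fderiv_fun_const] using (integrable_zero (EuclideanSpace ℝ (Fin n)) ℝ volume)
  · simpa using h2
  · simpa using h1

private lemma sign_lemma {Ω : Set (EuclideanSpace ℝ (Fin n))} (hconn : IsConnected Ω)
    {h : EuclideanSpace ℝ (Fin n) → ℝ} (hcont : ContinuousOn h Ω)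
    {c : ℝ} (hc : 0 < c) (hH : ∀ x ∈ Ω, c ≤ |h x|) :
    ∃ s : ℝ, |s| = 1 ∧ ∀ x ∈ Ω, c ≤ s * h x := by
  have hne : ∀ x ∈ Ω, h x ≠ 0 := by
    intro x hx h0
    have := hH x hx
    rw [h0, abs_zero] at this
    linarith
  by_cases hpos : ∃ x₀ ∈ Ω, 0 < h x₀
  · obtain ⟨x₀, hx₀, hp⟩ := hpos
    refine ⟨1, by norm_num, fun x hx => ?_⟩
    have hxpos : 0 < h x := by
      by_contra hle
      push_neg at hle
      have h0m : (0:ℝ) ∈ Icc (h x) (h x₀) := ⟨hle, hp.le⟩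
      obtain ⟨z, hz, hz0⟩ := hconn.isPreconnected.intermediate_value hx hx₀ hcont h0m
      exact hne z hz hz0
    have := hH x hx
    rw [abs_of_pos hxpos] at this
    linarith
  · push_neg at hpos
    refine ⟨-1, by norm_num, fun x hx => ?_⟩
    have hxneg : h x < 0 := lt_of_le_of_ne (hpos x hx) (hne x hx)
    have := hH x hx
    rw [abs_of_neg hxneg] at this
    linarith

private lemma amgm {a b c : ℝ} (hc : 0 < c) : 2 * a * b ≤ c / 2 * a ^ 2 + 2 / c * b ^ 2 := by
  have key : c / 2 * a ^ 2 + 2 / c * b ^ 2 - 2 * a * b = (c * a - 2 * b) ^ 2 / (2 * c) := by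
    field_simp
    ring
  nlinarith [div_nonneg (sq_nonneg (c * a - 2 * b)) (by linarith : (0:ℝ) ≤ 2 * c)]

end Aux
open InnerProductSpace Set Topology in
set_option maxHeartbeats 1000000 in
/-- Chern–Heinz–Salavessa inequality for graphs over domains of Euclidean space
(Corollary 1.7 of the paper). -/
theorem stmt2 {n : ℕ} (Ω : Set (EuclideanSpace ℝ (Fin n))) (hΩ : IsOpen Ω)
    (hconn : IsConnected Ω)
    (f : EuclideanSpace ℝ (Fin n) → ℝ) (hf : ContDiffOn ℝ 2 f Ω)
    (c : ℝ) (hc : 0 < c)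
    (hH : ∀ x ∈ Ω, c ≤ |meanCurvGraph f x|)
    (u : EuclideanSpace ℝ (Fin n) → ℝ) (hu : ContDiff ℝ (⊤ : ℕ∞) u)
    (husupp : HasCompactSupport u) (husub : tsupport u ⊆ Ω) :
    c ^ 2 * ∫ x in Ω, (u x) ^ 2 ≤ 4 * ∫ x in Ω, ‖gradient u x‖ ^ 2 := by
  classical
  set b := EuclideanSpace.basisFun (Fin n) ℝ with hbdef
  set K := tsupport u with hKdef
  have hKc : IsCompact K := husupp
  have hKcl : IsClosed K := isClosed_tsupport u
  have huK : ∀ x ∉ K, u x = 0 := fun x hx => image_eq_zero_of_notMem_tsupport hx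
  have hu_cont : Continuous u := hu.continuous
  have hfdu_cont : Continuous (fderiv ℝ u) := hu.continuous_fderiv (by simp)
  have huev : ∀ x ∉ K, u =ᶠ[𝓝 x] (fun _ => (0:ℝ)) := by
    intro x hx
    filter_upwards [hKcl.isOpen_compl.mem_nhds hx] with y hy using huK y hy
  have hgradu0 : ∀ x ∉ K, gradient u x = 0 := by
    intro x hx
    rw [(huev x hx).gradient_eq, gradient, fderiv_fun_const]
    simp
  -- the vector field X = ∇f / W
  set X : EuclideanSpace ℝ (Fin n) → EuclideanSpace ℝ (Fin n) :=
    fun x => (Wgraph f x)⁻¹ • gradient f x with hXdef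
  have hW1 : ∀ x, 1 ≤ Wgraph f x := by
    intro x
    rw [Wgraph]
    nlinarith [Real.sq_sqrt (by positivity : (0:ℝ) ≤ 1 + ‖gradient f x‖^2),
      Real.sqrt_nonneg (1 + ‖gradient f x‖^2), sq_nonneg ‖gradient f x‖]
  have hXle : ∀ x, ‖X x‖ ≤ 1 := by
    intro x
    have hWpos : 0 < Wgraph f x := lt_of_lt_of_le one_pos (hW1 x)
    rw [hXdef]
    simp only [norm_smul, norm_inv, Real.norm_eq_abs, abs_of_pos hWpos]
    rw [inv_mul_le_iff₀ hWpos, mul_one, Wgraph]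
    nlinarith [Real.sq_sqrt (by positivity : (0:ℝ) ≤ 1 + ‖gradient f x‖^2),
      Real.sqrt_nonneg (1 + ‖gradient f x‖^2),
      sq_nonneg (Real.sqrt (1 + ‖gradient f x‖^2) - ‖gradient f x‖), norm_nonneg (gradient f x)]
  have hgradf : ContDiffOn ℝ 1 (gradient f) Ω := by
    have h1 : ContDiffOn ℝ 1 (fderiv ℝ f) Ω := hf.fderiv_of_isOpen hΩ le_rfl
    exact (toDual ℝ (EuclideanSpace ℝ (Fin n))).symm.toContinuousLinearEquiv.contDiff.comp_contDiffOn h1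
  have hWinv : ContDiffOn ℝ 1 (fun x => (Wgraph f x)⁻¹) Ω := by
    have h1 : ContDiffOn ℝ 1 (fun x => 1 + ‖gradient f x‖ ^ 2) Ω :=
      contDiffOn_const.add (hgradf.norm_sq ℝ)
    have h2 : ContDiffOn ℝ 1 (fun x => Real.sqrt (1 + ‖gradient f x‖ ^ 2)) Ω :=
      h1.sqrt fun x _ => by positivity
    have h3 : ContDiffOn ℝ 1 (Wgraph f) Ω := by
      exact h2
    exact h3.inv fun x _ => by linarith [hW1 x]
  have hXC : ContDiffOn ℝ 1 X Ω := hWinv.smul hgradf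
  have hXd : ∀ x ∈ Ω, DifferentiableAt ℝ X x := fun x hx =>
    (hXC.differentiableOn (by norm_num)).differentiableAt (hΩ.mem_nhds hx)
  -- continuity of the mean curvature on Ω
  have hfdX : ContinuousOn (fderiv ℝ X) Ω := hXC.continuousOn_fderiv_of_isOpen hΩ le_rfl
  have hHcont : ContinuousOn (meanCurvGraph f) Ω := by
    have hT : Continuous fun A : EuclideanSpace ℝ (Fin n) →L[ℝ] EuclideanSpace ℝ (Fin n) =>
        LinearMap.trace ℝ (EuclideanSpace ℝ (Fin n)) A.toLinearMap :=
      LinearMap.continuous_of_finiteDimensional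
        ((LinearMap.trace ℝ (EuclideanSpace ℝ (Fin n))).comp (ContinuousLinearMap.coeLM ℝ))
    have : meanCurvGraph f = fun x =>
        LinearMap.trace ℝ (EuclideanSpace ℝ (Fin n)) (fderiv ℝ X x).toLinearMap := rfl
    rw [this]
    exact hT.comp_continuousOn hfdX
  obtain ⟨s, hs1, hsH⟩ := sign_lemma hconn hHcont hc hH
  set V : EuclideanSpace ℝ (Fin n) → EuclideanSpace ℝ (Fin n) := fun x => s • X x with hVdef
  have hVle : ∀ x, ‖V x‖ ≤ 1 := by
    intro x
    rw [hVdef]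
    simp only [norm_smul, Real.norm_eq_abs, hs1, one_mul]
    exact hXle x
  have hVC : ContDiffOn ℝ 1 V Ω := hXC.const_smul s
  have hVd : ∀ x ∈ Ω, DifferentiableAt ℝ V x := fun x hx =>
    (hVC.differentiableOn (by norm_num)).differentiableAt (hΩ.mem_nhds hx)
  have hVcont : ContinuousOn V Ω := hVC.continuousOn
  -- the compactly supported vector field g = u² • V
  set g : EuclideanSpace ℝ (Fin n) → EuclideanSpace ℝ (Fin n) := fun x => (u x) ^ 2 • V x
    with hgdef
  have hgK : ∀ x ∉ K, g x = 0 := by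
    intro x hx
    rw [hgdef]
    simp [huK x hx]
  have hgev : ∀ x ∉ K, g =ᶠ[𝓝 x] (fun _ => (0 : EuclideanSpace ℝ (Fin n))) := by
    intro x hx
    filter_upwards [hKcl.isOpen_compl.mem_nhds hx] with y hy using hgK y hy
  have hu2 : ∀ x, HasFDerivAt (fun y => u y ^ 2) ((2 * u x) • fderiv ℝ u x) x := by
    intro x
    have h := (hu.differentiable (by simp) x).hasFDerivAt
    have := h.mul h
    simpa [sq, two_mul, add_smul, Pi.mul_def] using this
  set D : EuclideanSpace ℝ (Fin n) →
      (EuclideanSpace ℝ (Fin n) →L[ℝ] EuclideanSpace ℝ (Fin n)) := fun x =>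
    if x ∈ Ω then (u x ^ 2) • fderiv ℝ V x + ((2 * u x) • fderiv ℝ u x).smulRight (V x) else 0
    with hDdef
  have hgD : ∀ x, HasFDerivAt g (D x) x := by
    intro x
    by_cases hx : x ∈ Ω
    · rw [hDdef]
      simp only [if_pos hx]
      exact (hu2 x).smul ((hVd x hx).hasFDerivAt)
    · have hxK : x ∉ K := fun h => hx (husub h)
      rw [hDdef]
      simp only [if_neg hx]
      exact (hasFDerivAt_const (0 : EuclideanSpace ℝ (Fin n)) x).congr_of_eventuallyEq
        (hgev x hxK)
  have hgdiff : Differentiable ℝ g := fun x => (hgD x).differentiableAt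
  have hfg : ∀ x, fderiv ℝ g x = D x := fun x => (hgD x).fderiv
  have hgcont : Continuous g := glue_continuous hΩ hKcl husub
    (((hu_cont.pow 2).continuousOn).smul hVcont) hgK
  have hgC1 : ContDiffOn ℝ 1 g Ω := ((hu.pow 2).of_le (by simp)).contDiffOn.smul hVC
  have hfdg_contOn : ContinuousOn (fderiv ℝ g) Ω := hgC1.continuousOn_fderiv_of_isOpen hΩ le_rfl
  have hfdgK : ∀ x ∉ K, fderiv ℝ g x = 0 := by
    intro x hx
    rw [(hgev x hx).fderiv_eq, fderiv_fun_const]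
    simp
  have hfdg_cont : Continuous (fderiv ℝ g) := glue_continuous hΩ hKcl husub hfdg_contOn hfdgK
  -- each component integral of the divergence vanishes
  have hIcomp : ∀ i : Fin n, Integrable (fun x => fderiv ℝ g x (b i) i) := by
    intro i
    have hco : Continuous fun x => fderiv ℝ g x (b i) i := by
      have h1 : Continuous fun x => fderiv ℝ g x (b i) :=
        (ContinuousLinearMap.apply ℝ (EuclideanSpace ℝ (Fin n)) (b i)).continuous.comp hfdg_cont
      exact (EuclideanSpace.proj i (𝕜 := ℝ)).continuous.comp h1
    apply hco.integrable_of_hasCompactSupport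
    apply HasCompactSupport.intro hKc
    intro x hx
    rw [hfdgK x hx]
    simp
  have hcomp0 : ∀ i : Fin n, ∫ x, fderiv ℝ g x (b i) i = 0 := by
    intro i
    have hgi : Differentiable ℝ (fun x => g x i) := fun x =>
      ((EuclideanSpace.proj i (𝕜 := ℝ)).differentiableAt).comp x (hgdiff x)
    have hfd : ∀ x, fderiv ℝ (fun y => g y i) x
        = (EuclideanSpace.proj i (𝕜 := ℝ)).comp (fderiv ℝ g x) := by
      intro x
      rw [show (fun y => g y i) = (EuclideanSpace.proj i (𝕜 := ℝ)) ∘ g from rfl,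
        fderiv_comp x (EuclideanSpace.proj i (𝕜 := ℝ)).differentiableAt (hgdiff x),
        ContinuousLinearMap.fderiv]
    have h1 : Integrable (fun x => g x i) := by
      apply (((EuclideanSpace.proj i (𝕜 := ℝ)).continuous.comp hgcont).integrable_of_hasCompactSupport)
      apply HasCompactSupport.intro hKc
      intro x hx
      rw [Function.comp_apply, hgK x hx]
      simp
    have h2 : Integrable (fun x => fderiv ℝ (fun y => g y i) x (b i)) := by
      have : (fun x => fderiv ℝ (fun y => g y i) x (b i)) = fun x => fderiv ℝ g x (b i) i := by
        funext x
        rw [hfd x]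
        rfl
      rw [this]
      exact hIcomp i
    have h0 := integral_fd_zero _ (b i) hgi h1 h2
    have heq : (fun x => fderiv ℝ (fun y => g y i) x (b i)) = fun x => fderiv ℝ g x (b i) i := by
      funext x
      rw [hfd x]
      rfl
    rwa [heq] at h0
  -- the two scalar pieces of the divergence
  set B : EuclideanSpace ℝ (Fin n) → ℝ := fun x => u x ^ 2 * (s * meanCurvGraph f x) with hBdef
  set C : EuclideanSpace ℝ (Fin n) → ℝ := fun x => 2 * u x * fderiv ℝ u x (V x) with hCdef
  have hdiv : ∀ x, ∑ i, fderiv ℝ g x (b i) i = B x + C x := by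
    intro x
    by_cases hx : x ∈ Ω
    · have hDval : fderiv ℝ g x
          = (u x ^ 2) • fderiv ℝ V x + ((2 * u x) • fderiv ℝ u x).smulRight (V x) := by
        rw [hfg, hDdef]
        simp only [if_pos hx]
      have e1 : ∀ i : Fin n, fderiv ℝ g x (b i) i
          = u x ^ 2 * (fderiv ℝ V x (b i) i)
            + (2 * u x * fderiv ℝ u x (b i)) * (V x i) := by
        intro i
        rw [hDval]
        simp [ContinuousLinearMap.smulRight_apply, mul_assoc]
      rw [Finset.sum_congr rfl fun i _ => e1 i, Finset.sum_add_distrib, ← Finset.mul_sum]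
      have hfirst : ∑ i, fderiv ℝ V x (b i) i = s * meanCurvGraph f x := by
        have hVX : fderiv ℝ V x = s • fderiv ℝ X x := fderiv_const_smul (hXd x hx) s
        have h1 : ∑ i, fderiv ℝ V x (b i) i = s * ∑ i, fderiv ℝ X x (b i) i := by
          rw [hVX, Finset.mul_sum]
          refine Finset.sum_congr rfl fun i _ => ?_
          simp
        rw [h1]
        congr 1
        rw [meanCurvGraph, divergence, ← hXdef, trace_eq_sum_coord, hbdef]
      have hsecond : ∑ i, (2 * u x * fderiv ℝ u x (b i)) * (V x i)
          = 2 * u x * fderiv ℝ u x (V x) := by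
        have : ∀ i : Fin n, (2 * u x * fderiv ℝ u x (b i)) * (V x i)
            = 2 * u x * (fderiv ℝ u x (b i) * V x i) := by intro i; ring
        rw [Finset.sum_congr rfl fun i _ => this i, ← Finset.mul_sum, sum_coord_apply]
      rw [hfirst, hsecond]
    · have hxK : x ∉ K := fun h => hx (husub h)
      rw [hBdef, hCdef]
      simp [hfdgK x hxK, huK x hxK]
  -- integrability of all scalar quantities
  have hBcont : Continuous B := by
    apply glue_continuous hΩ hKcl husub
    · exact ((hu_cont.pow 2).continuousOn).mul (continuousOn_const.mul hHcont)
    · intro x hx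
      rw [hBdef]
      simp [huK x hx]
  have hBint : Integrable B := by
    apply hBcont.integrable_of_hasCompactSupport
    apply HasCompactSupport.intro hKc
    intro x hx
    rw [hBdef]
    simp [huK x hx]
  have hCcont : Continuous C := by
    apply glue_continuous hΩ hKcl husub
    · exact (continuousOn_const.mul hu_cont.continuousOn).mul
        (hfdu_cont.continuousOn.clm_apply hVcont)
    · intro x hx
      rw [hCdef]
      simp [huK x hx]
  have hCint : Integrable C := by
    apply hCcont.integrable_of_hasCompactSupport
    apply HasCompactSupport.intro hKc
    intro x hx
    rw [hCdef]
    simp [huK x hx]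
  have hu2int : Integrable (fun x => u x ^ 2) := by
    apply (hu_cont.pow 2).integrable_of_hasCompactSupport
    apply HasCompactSupport.intro hKc
    intro x hx
    simp [huK x hx]
  have hgradu_cont : Continuous fun x => ‖gradient u x‖ ^ 2 := by
    have h1 : Continuous (gradient u) := by
      have : Continuous fun x => (toDual ℝ (EuclideanSpace ℝ (Fin n))).symm (fderiv ℝ u x) :=
        (toDual ℝ (EuclideanSpace ℝ (Fin n))).symm.continuous.comp hfdu_cont
      exact this
    exact (h1.norm).pow 2
  have hgradint : Integrable (fun x => ‖gradient u x‖ ^ 2) := by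
    apply hgradu_cont.integrable_of_hasCompactSupport
    apply HasCompactSupport.intro hKc
    intro x hx
    simp [hgradu0 x hx]
  -- ∫ B + ∫ C = 0
  have hint0 : (∫ x, B x) + (∫ x, C x) = 0 := by
    have h1 : (fun x => B x + C x) = fun x => ∑ i, fderiv ℝ g x (b i) i :=
      funext fun x => (hdiv x).symm
    have h2 : ∫ x, (B x + C x) = ∑ i, ∫ x, fderiv ℝ g x (b i) i := by
      rw [h1]
      exact integral_finset_sum _ fun i _ => hIcomp i
    rw [← integral_add hBint hCint, h2]
    simp [hcomp0]
  -- replace set-integrals over Ω by integrals over the whole space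
  have h1 : ∫ x in Ω, u x ^ 2 = ∫ x, u x ^ 2 := by
    apply setIntegral_eq_integral_of_forall_compl_eq_zero
    intro x hx
    simp [huK x fun h => hx (husub h)]
  have h2 : ∫ x in Ω, ‖gradient u x‖ ^ 2 = ∫ x, ‖gradient u x‖ ^ 2 := by
    apply setIntegral_eq_integral_of_forall_compl_eq_zero
    intro x hx
    simp [hgradu0 x fun h => hx (husub h)]
  have h3 : ∫ x in Ω, B x = ∫ x, B x := by
    apply setIntegral_eq_integral_of_forall_compl_eq_zero
    intro x hx
    rw [hBdef]
    simp [huK x fun h => hx (husub h)]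
  -- step 1 : c ∫ u² ≤ ∫ B
  have step1 : c * ∫ x, u x ^ 2 ≤ ∫ x, B x := by
    rw [← h1, ← h3, ← integral_const_mul]
    apply setIntegral_mono_on (hu2int.const_mul c).integrableOn hBint.integrableOn
      hΩ.measurableSet
    intro x hx
    rw [hBdef]
    calc c * u x ^ 2 = u x ^ 2 * c := by ring
      _ ≤ u x ^ 2 * (s * meanCurvGraph f x) :=
          mul_le_mul_of_nonneg_left (hsH x hx) (sq_nonneg _)
  -- step 2 : -∫ C ≤ (c/2) ∫ u² + (2/c) ∫ ‖∇u‖²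
  have step2 : -∫ x, C x ≤ (c / 2 * ∫ x, u x ^ 2) + (2 / c * ∫ x, ‖gradient u x‖ ^ 2) := by
    rw [← integral_neg]
    have hpt : ∀ x, -C x ≤ c / 2 * u x ^ 2 + 2 / c * ‖gradient u x‖ ^ 2 := by
      intro x
      have hb1 : |fderiv ℝ u x (V x)| ≤ ‖fderiv ℝ u x‖ := by
        calc |fderiv ℝ u x (V x)| ≤ ‖fderiv ℝ u x‖ * ‖V x‖ := (fderiv ℝ u x).le_opNorm (V x)
          _ ≤ ‖fderiv ℝ u x‖ * 1 := by
              exact mul_le_mul_of_nonneg_left (hVle x) (norm_nonneg _)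
          _ = ‖fderiv ℝ u x‖ := mul_one _
      have hnorm : ‖gradient u x‖ = ‖fderiv ℝ u x‖ := by
        rw [gradient]
        exact LinearIsometryEquiv.norm_map _ _
      have h2' : -C x ≤ 2 * |u x| * ‖fderiv ℝ u x‖ := by
        rw [hCdef]
        simp only [neg_mul]
        calc -(2 * u x * fderiv ℝ u x (V x)) ≤ |2 * u x * fderiv ℝ u x (V x)| := neg_le_abs _
          _ = 2 * |u x| * |fderiv ℝ u x (V x)| := by
              rw [abs_mul, abs_mul, abs_two]
          _ ≤ 2 * |u x| * ‖fderiv ℝ u x‖ := by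
              apply mul_le_mul_of_nonneg_left hb1
              positivity
      calc -C x ≤ 2 * |u x| * ‖fderiv ℝ u x‖ := h2'
        _ ≤ c / 2 * |u x| ^ 2 + 2 / c * ‖fderiv ℝ u x‖ ^ 2 := amgm hc
        _ = c / 2 * u x ^ 2 + 2 / c * ‖gradient u x‖ ^ 2 := by rw [sq_abs, hnorm]
    calc ∫ x, -C x ≤ ∫ x, (c / 2 * u x ^ 2 + 2 / c * ‖gradient u x‖ ^ 2) := by
          apply integral_mono hCint.neg
            ((hu2int.const_mul (c / 2)).add (hgradint.const_mul (2 / c))) hpt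
      _ = (c / 2 * ∫ x, u x ^ 2) + (2 / c * ∫ x, ‖gradient u x‖ ^ 2) := by
          rw [integral_add (hu2int.const_mul (c / 2)) (hgradint.const_mul (2 / c)),
            integral_const_mul, integral_const_mul]
  -- combine everything
  have hBC : ∫ x, B x = -∫ x, C x := by linarith
  have key : c / 2 * ∫ x, u x ^ 2 ≤ 2 / c * ∫ x, ‖gradient u x‖ ^ 2 := by linarith
  have hfin := mul_le_mul_of_nonneg_left key (by positivity : (0:ℝ) ≤ 2 * c)
  have e1 : 2 * c * (c / 2 * ∫ x, u x ^ 2) = c ^ 2 * ∫ x, u x ^ 2 := by ring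
  have e2 : 2 * c * (2 / c * ∫ x, ‖gradient u x‖ ^ 2) = 4 * ∫ x, ‖gradient u x‖ ^ 2 := by
    field_simp
    ring
  rw [h1, h2]
  rw [e1, e2] at hfin
  exact hfin
end

section
/- Let η : ℝⁿ → ℝⁿ be a C¹ vector field with ‖η(x)‖ = 1 for every x ∈ ℝⁿ. If div η is a constant function on ℝⁿ, equal to a ∈ ℝ, then a = 0. In other words, if ℝⁿ is foliated by a transversally oriented codimension-one C² foliation all of whose leaves have the same constant mean curvature, then every leaf is minimal. -/
/-!
On the cube `[0, s]ⁿ` the divergence theorem turns `a sⁿ` into the flux of `η` through the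
boundary. Since `|ηᵢ| ≤ ‖η‖ = 1`, each of the `2n` faces contributes at most `sⁿ⁻¹`, so
`|a| s ≤ 2n` for every `s > 0`, which forces `a = 0`.
-/

open MeasureTheory Set

theorem LinearMap.trace_eq_sum_apply_single {R ι : Type*} [CommRing R] [Fintype ι]
    [DecidableEq ι] (T : (ι → R) →ₗ[R] ι → R) :
    LinearMap.trace R (ι → R) T = ∑ i, T (Pi.single i 1) i := by
  rw [LinearMap.trace_eq_matrix_trace R (Pi.basisFun R ι), LinearMap.toMatrix_eq_toMatrix',
    Matrix.trace]
  simp [LinearMap.toMatrix'_apply]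

theorem abs_integral_divergence_le_of_norm_le {n : ℕ} {f : (Fin (n + 1) → ℝ) → Fin (n + 1) → ℝ}
    {f' : (Fin (n + 1) → ℝ) → (Fin (n + 1) → ℝ) →L[ℝ] Fin (n + 1) → ℝ}
    {a b : Fin (n + 1) → ℝ} {C : ℝ} (hle : a ≤ b) (hc : ContinuousOn f (Icc a b))
    (hd : ∀ x ∈ pi univ fun i => Ioo (a i) (b i), HasFDerivAt f (f' x) x)
    (hi : IntegrableOn (fun x => ∑ i, f' x (Pi.single i 1) i) (Icc a b))
    (hC : ∀ x, ‖f x‖ ≤ C) :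
    |∫ x in Icc a b, ∑ i, f' x (Pi.single i 1) i| ≤
      ∑ i : Fin (n + 1), 2 * C * volume.real (Icc (a ∘ i.succAbove) (b ∘ i.succAbove)) := by
  have face_le : ∀ (i : Fin (n + 1)) (c : ℝ),
      ‖∫ x in Icc (a ∘ i.succAbove) (b ∘ i.succAbove), f (i.insertNth c x) i‖ ≤
        C * volume.real (Icc (a ∘ i.succAbove) (b ∘ i.succAbove)) := fun i c =>
    norm_setIntegral_le_of_norm_le_const isCompact_Icc.measure_lt_top
      fun x _ => (norm_le_pi_norm _ i).trans (hC _)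
  rw [integral_divergence_of_hasFDerivAt_off_countable a b hle f f' ∅ countable_empty hc
    (fun x hx => hd x hx.1) hi]
  refine (Finset.abs_sum_le_sum_abs _ _).trans (Finset.sum_le_sum fun i _ => ?_)
  calc _ ≤ _ := abs_sub _ _
    _ ≤ _ := add_le_add (face_le i _) (face_le i _)
    _ = _ := by ring

theorem volume_real_Icc_zero_const_pi {ι : Type*} [Fintype ι] {s : ℝ} (hs : 0 ≤ s) :
    volume.real (Icc (fun _ : ι => (0 : ℝ)) fun _ => s) = s ^ Fintype.card ι := by
  rw [measureReal_def, Real.volume_Icc_pi_toReal fun _ => hs]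
  simp

theorem eq_zero_of_forall_abs_mul_le {a K : ℝ} (h : ∀ s > 0, |a| * s ≤ K) : a = 0 := by
  by_contra ha
  have hpos : 0 < |a| := abs_pos.mpr ha
  have := h ((|K| + 1) / |a|) (by positivity)
  rw [mul_div_cancel₀ _ hpos.ne'] at this
  linarith [le_abs_self K]

theorem eq_zero_of_bounded_of_trace_fderiv_eq_pi {n : ℕ} {f : (Fin n → ℝ) → Fin n → ℝ}
    {c C : ℝ} (hf : Differentiable ℝ f) (hC : ∀ x, ‖f x‖ ≤ C)
    (hdiv : ∀ x, LinearMap.trace ℝ (Fin n → ℝ) (fderiv ℝ f x) = c) : c = 0 := by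
  rcases n with _ | n
  · simp [← hdiv 0, LinearMap.trace_eq_sum_apply_single]
  have hdiv' : ∀ x, ∑ i, fderiv ℝ f x (Pi.single i 1) i = c := fun x => by
    rw [← hdiv x, LinearMap.trace_eq_sum_apply_single]
    rfl
  refine eq_zero_of_forall_abs_mul_le (K := (n + 1) * (2 * C)) fun s hs => ?_
  have hle : (fun _ => 0 : Fin (n + 1) → ℝ) ≤ fun _ => s := fun _ => hs.le
  have hint : IntegrableOn (fun x => ∑ i, fderiv ℝ f x (Pi.single i 1) i)
      (Icc (fun _ => 0) fun _ => s) := by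
    simpa only [hdiv'] using integrableOn_const isCompact_Icc.measure_lt_top.ne
  have flux := abs_integral_divergence_le_of_norm_le hle hf.continuous.continuousOn
    (fun x _ => (hf x).hasFDerivAt) hint hC
  simp only [hdiv', setIntegral_const, volume_real_Icc_zero_const_pi hs.le, smul_eq_mul, abs_mul,
    Function.comp_def, Finset.sum_const, Finset.card_univ, Fintype.card_fin, nsmul_eq_mul,
    Nat.cast_succ, abs_of_pos (pow_pos hs _)] at flux
  refine le_of_mul_le_mul_left ?_ (pow_pos hs n)
  calc s ^ n * (|c| * s) = s ^ (n + 1) * |c| := by ring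
    _ ≤ (n + 1) * (2 * C * s ^ n) := flux
    _ = s ^ n * ((n + 1) * (2 * C)) := by ring

theorem eq_zero_of_bounded_of_trace_fderiv_eq {F : Type*} [NormedAddCommGroup F]
    [NormedSpace ℝ F] [FiniteDimensional ℝ F] {X : F → F} {c C : ℝ} (hX : Differentiable ℝ X)
    (hC : ∀ x, ‖X x‖ ≤ C) (hdiv : ∀ x, LinearMap.trace ℝ F (fderiv ℝ X x) = c) : c = 0 := by
  let e : F ≃L[ℝ] (Fin (Module.finrank ℝ F) → ℝ) :=
    (Module.finBasis ℝ F).equivFun.toContinuousLinearEquiv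
  refine eq_zero_of_bounded_of_trace_fderiv_eq_pi (f := e ∘ X ∘ e.symm)
    (C := ‖e.toContinuousLinearMap‖ * C) ?_ ?_ ?_
  · exact e.differentiable.comp (hX.comp e.symm.differentiable)
  · intro y
    exact (e.toContinuousLinearMap.le_opNorm _).trans
      (mul_le_mul_of_nonneg_left (hC _) (norm_nonneg _))
  · intro y
    rw [e.comp_fderiv, e.symm.comp_right_fderiv, ← hdiv (e.symm y)]
    convert LinearMap.trace_conj' (fderiv ℝ X (e.symm y) : F →ₗ[ℝ] F) e.toLinearEquiv using 2
    ext v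
    simp [LinearEquiv.conj_apply]

/-- If `ℝⁿ` is foliated by a transversally oriented codimension-one foliation, with unit
normal field `η`, all of whose leaves have the same constant mean curvature `a = div η`,
then every leaf is minimal: `a = 0`. -/
theorem stmt4 {n : ℕ} (η : EuclideanSpace ℝ (Fin n) → EuclideanSpace ℝ (Fin n))
    (hη : ContDiff ℝ 1 η) (hunit : ∀ x, ‖η x‖ = 1) (a : ℝ)
    (hdiv : ∀ x, divergence η x = a) : a = 0 :=
  eq_zero_of_bounded_of_trace_fderiv_eq (hη.differentiable one_ne_zero) (fun x => (hunit x).le)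
    hdiv
end

section
/- Let n ≥ 2, let T ⊆ ℝⁿ be an open set, ρ > 0, and let c : T → ℝⁿ be a C¹ map such that for every x ∈ T: (i) 0 < ‖x − c(x)‖ ≤ ρ, and (ii) the derivative of c at x vanishes on the orthogonal complement of x − c(x), i.e. (Dc)ₓ(v) = 0 whenever ⟨v, x − c(x)⟩ = 0. Then for every smooth function u : ℝⁿ → ℝ with compact support contained in T one has (n−1)² ∫_T u² ≤ 4 ρ² ∫_T ‖∇u‖². Equivalently, λ*(T) ≥ (n−1)²/(4ρ²). -/
open MeasureTheory

set_option maxHeartbeats 1000000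

noncomputable section HMOHelpers

theorem hmo_int_fderiv {E : Type*} [NormedAddCommGroup E] [NormedSpace ℝ E] [MeasurableSpace E]
    [BorelSpace E] [FiniteDimensional ℝ E] (μ : Measure E) [μ.IsAddHaarMeasure]
    (g : E → ℝ) (hg : ContDiff ℝ 1 g) (h'g : HasCompactSupport g) (v : E) :
    ∫ x, fderiv ℝ g x v ∂μ = 0 := by
  obtain ⟨C, hC⟩ := hg.lipschitzWith_of_hasCompactSupport h'g one_ne_zero
  have h1 := LipschitzWith.integral_lineDeriv_mul_eq (μ := μ) (f := fun _ : E => (1:ℝ))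
    (LipschitzWith.const (1:ℝ)) hC h'g (-v)
  have h2 : ∀ x : E, lineDeriv ℝ (fun _ => (1:ℝ)) x (-v) = 0 := fun x => by
    simp [lineDeriv, hasDerivAt_const, deriv_const]
  have h3 : ∀ x : E, lineDeriv ℝ g x (- -v) = fderiv ℝ g x v := fun x => by
    rw [neg_neg]
    exact ((hg.differentiable one_ne_zero) x).lineDeriv_eq_fderiv
  simp only [h2, h3, zero_mul, mul_one, integral_zero] at h1
  exact h1.symm

theorem hmo_div_int_zero {n : ℕ} (F : EuclideanSpace ℝ (Fin n) → EuclideanSpace ℝ (Fin n))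
    (hF : ContDiff ℝ 1 F) (h'F : HasCompactSupport F) :
    ∫ x, (∑ i, fderiv ℝ F x (EuclideanSpace.single i 1) i) = 0 := by
  have key : ∀ i : Fin n, ∫ x, fderiv ℝ F x (EuclideanSpace.single i 1) i = 0 := by
    intro i
    have hFi : ContDiff ℝ 1 (fun y => F y i) :=
      (EuclideanSpace.proj (𝕜 := ℝ) i).contDiff.comp hF
    have h'Fi : HasCompactSupport (fun y => F y i) := by
      apply h'F.comp_left (g := fun z : EuclideanSpace ℝ (Fin n) => z i)
      simp
    have hfd : ∀ x, fderiv ℝ (fun y => F y i) x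
        = (EuclideanSpace.proj (𝕜 := ℝ) i).comp (fderiv ℝ F x) := by
      intro x
      exact ((EuclideanSpace.proj (𝕜 := ℝ) i).hasFDerivAt.comp x
        ((hF.differentiable one_ne_zero) x).hasFDerivAt).fderiv
    have := hmo_int_fderiv volume (fun y => F y i) hFi h'Fi (EuclideanSpace.single i 1)
    simpa [hfd] using this
  have hint : ∀ i : Fin n, Integrable (fun x => fderiv ℝ F x (EuclideanSpace.single i 1) i) := by
    intro i
    apply Continuous.integrable_of_hasCompactSupport
    · have h1 : Continuous (fun x => fderiv ℝ F x) := hF.continuous_fderiv one_ne_zero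
      exact (EuclideanSpace.proj (𝕜 := ℝ) i).continuous.comp
        ((ContinuousLinearMap.apply ℝ _ (EuclideanSpace.single i (1:ℝ))).continuous.comp h1)
    · apply (h'F.fderiv ℝ).comp_left
        (g := fun L : EuclideanSpace ℝ (Fin n) →L[ℝ] EuclideanSpace ℝ (Fin n) =>
          L (EuclideanSpace.single i 1) i)
      simp
  rw [integral_finset_sum _ (fun i _ => hint i)]
  simp [key]

variable {n : ℕ}
local notation "E" => EuclideanSpace ℝ (Fin n)

lemma hmo_div_formula (c : E → E) (u : E → ℝ) (x : E)
    (hcd : DifferentiableAt ℝ c x) (hud : DifferentiableAt ℝ u x)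
    (hr : 0 < ‖x - c x‖)
    (hA : ∀ v : E, (inner ℝ v (x - c x) : ℝ) = 0 → fderiv ℝ c x v = 0) :
    ∃ Φ : E →L[ℝ] E,
      HasFDerivAt (fun y => (u y) ^ 2 • (‖y - c y‖⁻¹ • (y - c y))) Φ x ∧
      ∑ i, Φ (EuclideanSpace.single i 1) i
        = 2 * u x * (inner ℝ (gradient u x) (‖x - c x‖⁻¹ • (x - c x)) : ℝ)
          + ((n : ℝ) - 1) * ‖x - c x‖⁻¹ * (u x) ^ 2 := by
  set w : E := x - c x with hw_def
  set r : ℝ := ‖w‖ with hr_def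
  have hrne : r ≠ 0 := ne_of_gt hr
  set η : E := r⁻¹ • w with hη_def
  set A : E →L[ℝ] E := fderiv ℝ c x with hA_def
  set a : E := A η with ha_def
  -- step A : A v = ⟪v, η⟫ • a
  have hηnorm : (inner ℝ η η : ℝ) = 1 := by
    rw [real_inner_self_eq_norm_sq]
    rw [hη_def, norm_smul, Real.norm_eq_abs, abs_of_nonneg (inv_nonneg.2 (norm_nonneg w))]
    rw [← hr_def]
    field_simp
  have hAv : ∀ v : E, A v = (inner ℝ v η : ℝ) • a := by
    intro v
    have h0 : (inner ℝ (v - (inner ℝ v η : ℝ) • η) w : ℝ) = 0 := by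
      rw [inner_sub_left, real_inner_smul_left]
      rw [hη_def, real_inner_smul_left, real_inner_smul_right]
      rw [real_inner_self_eq_norm_sq]
      field_simp
      ring
    have := hA _ h0
    rw [map_sub, A.map_smul] at this
    rw [← ha_def] at this
    exact sub_eq_zero.1 this
  set B : (E) →L[ℝ] (E) := ContinuousLinearMap.id ℝ (E) - A with hB_def
  have hBv : ∀ v : E, B v = v - (inner ℝ v η : ℝ) • a := by
    intro v
    simp [hB_def, hAv v]
  have hwD : HasFDerivAt (fun y => y - c y) B x := (hasFDerivAt_id x).sub hcd.hasFDerivAt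
  have hq : HasFDerivAt (fun y => (inner ℝ (y - c y) (y - c y) : ℝ))
      ((fderivInnerCLM ℝ (w, w)).comp (B.prod B)) x := hwD.inner ℝ hwD
  have hqx : (inner ℝ w w : ℝ) = r ^ 2 := by
    rw [real_inner_self_eq_norm_sq]
  have hsqrt : Real.sqrt (inner ℝ w w : ℝ) = r := by
    rw [hqx, Real.sqrt_sq hr.le]
  have hnorm_eq : (fun y : E => ‖y - c y‖) = fun y => Real.sqrt (inner ℝ (y - c y) (y - c y) : ℝ) := by
    funext y
    rw [real_inner_self_eq_norm_sq, Real.sqrt_sq (norm_nonneg _)]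
  set Q : (E) →L[ℝ] ℝ := (fderivInnerCLM ℝ (w, w)).comp (B.prod B) with hQ_def
  set R : (E) →L[ℝ] ℝ := (1 / (2 * Real.sqrt (inner ℝ w w : ℝ))) • Q with hR_def
  have hrD : HasFDerivAt (fun y : E => ‖y - c y‖) R x := by
    rw [hnorm_eq]
    exact (Real.hasDerivAt_sqrt (by rw [hqx]; positivity)).comp_hasFDerivAt x hq
  have hQv : ∀ v : E, Q v = 2 * ((inner ℝ v w : ℝ) - (inner ℝ v η : ℝ) * (inner ℝ a w : ℝ)) := by
    intro v
    have e1 : (inner ℝ w (v - (inner ℝ v η : ℝ) • a) : ℝ)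
        = (inner ℝ v w : ℝ) - (inner ℝ v η : ℝ) * (inner ℝ a w : ℝ) := by
      rw [real_inner_comm, inner_sub_left, real_inner_smul_left]
    have e2 : (inner ℝ (v - (inner ℝ v η : ℝ) • a) w : ℝ)
        = (inner ℝ v w : ℝ) - (inner ℝ v η : ℝ) * (inner ℝ a w : ℝ) := by
      rw [inner_sub_left, real_inner_smul_left]
    simp only [hQ_def, ContinuousLinearMap.comp_apply, ContinuousLinearMap.prod_apply,
      fderivInnerCLM_apply, hBv]
    rw [e1, e2]
    ring
  have hvw : ∀ v : E, (inner ℝ v w : ℝ) = r * (inner ℝ v η : ℝ) := by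
    intro v
    rw [hη_def, real_inner_smul_right]
    field_simp
  have hRv : ∀ v : E, R v = (inner ℝ v η : ℝ) * (1 - (inner ℝ a η : ℝ)) := by
    intro v
    simp only [hR_def, ContinuousLinearMap.smul_apply, smul_eq_mul, hsqrt, hQv]
    rw [hvw v, hvw a]
    field_simp
  have hinv : HasFDerivAt (fun y : E => ‖y - c y‖⁻¹) ((-(r ^ 2)⁻¹) • R) x :=
    (hasDerivAt_inv hrne).comp_hasFDerivAt x hrD
  have hηD : HasFDerivAt (fun y : E => ‖y - c y‖⁻¹ • (y - c y))
      (r⁻¹ • B + ((-(r ^ 2)⁻¹) • R).smulRight w) x := by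
    have := hinv.smul hwD
    exact this
  set U : (E) →L[ℝ] ℝ := fderiv ℝ u x with hU_def
  have hU : ∀ v : E, U v = (inner ℝ (gradient u x) v : ℝ) := by
    intro v
    have h1 : HasFDerivAt u ((InnerProductSpace.toDual ℝ (E)) (gradient u x)) x :=
      hud.hasGradientAt
    rw [hU_def, h1.fderiv]
    simp [InnerProductSpace.toDual_apply_apply]
  have hu2 : HasFDerivAt (fun y => u y ^ 2) ((2 * u x) • U) x := by
    have h := hud.hasFDerivAt.mul hud.hasFDerivAt
    have h2 : (u * u) = fun y => u y ^ 2 := by funext y; simp only [Pi.mul_apply]; ring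
    rw [h2] at h
    refine h.congr_fderiv ?_
    rw [two_mul, add_smul]
  refine ⟨(u x ^ 2) • (r⁻¹ • B + ((-(r ^ 2)⁻¹) • R).smulRight w)
      + ((2 * u x) • U).smulRight η, ?_, ?_⟩
  · exact hu2.smul hηD
  · set G : E := gradient u x with hG_def
    have hwi : ∀ i : Fin n, w i = r * η i := by
      intro i
      rw [hη_def]
      simp only [PiLp.smul_apply, smul_eq_mul]
      field_simp
    have hterm : ∀ i : Fin n,
        ((((u x ^ 2) • (r⁻¹ • B + ((-(r ^ 2)⁻¹) • R).smulRight w)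
          + ((2 * u x) • U).smulRight η) (EuclideanSpace.single i (1:ℝ))) i)
        = u x ^ 2 * (r⁻¹ - r⁻¹ * (η i * a i)
            - (r⁻¹ * (1 - (inner ℝ a η : ℝ))) * (η i * η i))
          + 2 * u x * (G i * η i) := by
      intro i
      simp only [ContinuousLinearMap.add_apply, ContinuousLinearMap.smul_apply,
        ContinuousLinearMap.smulRight_apply, hBv, hRv, hU, ← hG_def]
      simp only [PiLp.add_apply, PiLp.smul_apply, PiLp.sub_apply, smul_eq_mul,
        EuclideanSpace.inner_single_left, EuclideanSpace.single_apply, if_pos rfl,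
        conj_trivial, one_mul, EuclideanSpace.inner_single_right, mul_one]
      rw [hwi i]
      simp only [if_true]
      field_simp
      ring
    have hsum1 : ∑ i : Fin n, η i * a i = (inner ℝ η a : ℝ) := by
      simp [PiLp.inner_apply, RCLike.inner_apply, conj_trivial]
      exact Finset.sum_congr rfl (fun i _ => mul_comm _ _)
    have hsum2 : ∑ i : Fin n, η i * η i = 1 := by
      rw [← hηnorm, PiLp.inner_apply]; simp only [RCLike.inner_apply, conj_trivial]
    have hsum3 : ∑ i : Fin n, G i * η i = (inner ℝ G η : ℝ) := by
      simp [PiLp.inner_apply, RCLike.inner_apply, conj_trivial]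
      exact Finset.sum_congr rfl (fun i _ => mul_comm _ _)
    calc ∑ i : Fin n, _ = ∑ i : Fin n,
        (u x ^ 2 * (r⁻¹ - r⁻¹ * (η i * a i)
            - (r⁻¹ * (1 - (inner ℝ a η : ℝ))) * (η i * η i))
          + 2 * u x * (G i * η i)) := Finset.sum_congr rfl (fun i _ => hterm i)
      _ = 2 * u x * (inner ℝ G η : ℝ) + ((n : ℝ) - 1) * r⁻¹ * u x ^ 2 := by
          simp only [Finset.sum_add_distrib, Finset.sum_sub_distrib, ← Finset.mul_sum,
            Finset.sum_const, Finset.card_fin, nsmul_eq_mul, hsum1, hsum2, hsum3]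
          rw [real_inner_comm η a]
          ring

end HMOHelpers

/-- Haymann–Makai–Osserman inequality for embedded tubular neighborhoods of simple curves
in `ℝⁿ` (Theorem 1.10 of the paper). The map `c` assigns to each point `x` of the tube `T`
the center `c x` (on the curve) of the spherical cap through `x`; it is constant along
each cap and the caps have radius `‖x - c x‖ ≤ ρ`. -/
theorem stmt9 {n : ℕ} (hn : 2 ≤ n) (T : Set (EuclideanSpace ℝ (Fin n))) (hT : IsOpen T)
    (ρ : ℝ) (hρ : 0 < ρ)
    (c : EuclideanSpace ℝ (Fin n) → EuclideanSpace ℝ (Fin n))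
    (hc : ContDiffOn ℝ 1 c T)
    (hrad : ∀ x ∈ T, 0 < ‖x - c x‖ ∧ ‖x - c x‖ ≤ ρ)
    (hconst : ∀ x ∈ T, ∀ v : EuclideanSpace ℝ (Fin n),
      (inner ℝ v (x - c x) : ℝ) = 0 → fderiv ℝ c x v = 0)
    (u : EuclideanSpace ℝ (Fin n) → ℝ) (hu : ContDiff ℝ (⊤ : ℕ∞) u)
    (husupp : HasCompactSupport u) (husub : tsupport u ⊆ T) :
    ((n : ℝ) - 1) ^ 2 * ∫ x in T, (u x) ^ 2 ≤ 4 * ρ ^ 2 * ∫ x in T, ‖gradient u x‖ ^ 2 := by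
  classical
  have hu1 : ContDiff ℝ 1 u := hu.of_le (by simp)
  set F : EuclideanSpace ℝ (Fin n) → EuclideanSpace ℝ (Fin n) :=
    fun y => (u y) ^ 2 • (‖y - c y‖⁻¹ • (y - c y)) with hF_def
  have huz : ∀ x, x ∉ T → u x = 0 := fun x hx =>
    image_eq_zero_of_notMem_tsupport (fun h => hx (husub h))
  have hgradz : ∀ x, x ∉ tsupport u → gradient u x = 0 := by
    intro x hx
    have hev : u =ᶠ[nhds x] (fun _ => (0:ℝ)) := by
      filter_upwards [((isClosed_tsupport u).isOpen_compl).mem_nhds hx] with y hy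
      exact image_eq_zero_of_notMem_tsupport hy
    exact ((hasGradientAt_const x (0:ℝ)).congr_of_eventuallyEq hev).gradient
  have hgrad_cont : Continuous (gradient u) := by
    have : gradient u = fun x =>
        (InnerProductSpace.toDual ℝ (EuclideanSpace ℝ (Fin n))).symm (fderiv ℝ u x) := rfl
    rw [this]
    exact (InnerProductSpace.toDual ℝ _).symm.continuous.comp (hu1.continuous_fderiv one_ne_zero)
  have hFsupp : HasCompactSupport F := by
    apply husupp.mono
    intro x hx
    simp only [hF_def, Function.mem_support] at hx ⊢
    intro h
    apply hx
    rw [h]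
    simp
  have hFc1 : ContDiff ℝ 1 F := by
    rw [contDiff_iff_contDiffAt]
    intro x
    by_cases hx : x ∈ T
    · have hcx : ContDiffAt ℝ 1 c x := hc.contDiffAt (hT.mem_nhds hx)
      have hwx : ContDiffAt ℝ 1 (fun y => y - c y) x := contDiffAt_id.sub hcx
      have hnx : ContDiffAt ℝ 1 (fun y => ‖y - c y‖) x :=
        ContDiffAt.norm ℝ hwx (by
          have := (hrad x hx).1
          intro h
          rw [h] at this
          simp at this)
      have hix : ContDiffAt ℝ 1 (fun y => ‖y - c y‖⁻¹) x := hnx.inv (ne_of_gt (hrad x hx).1)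
      exact ((hu1.contDiffAt).pow 2).smul (hix.smul hwx)
    · have hx' : x ∉ tsupport u := fun h => hx (husub h)
      have hev : F =ᶠ[nhds x] (fun _ => (0 : EuclideanSpace ℝ (Fin n))) := by
        filter_upwards [((isClosed_tsupport u).isOpen_compl).mem_nhds hx'] with y hy
        simp [hF_def, image_eq_zero_of_notMem_tsupport hy]
      exact (contDiffAt_const (c := (0 : EuclideanSpace ℝ (Fin n)))).congr_of_eventuallyEq hev
  set D : EuclideanSpace ℝ (Fin n) → ℝ :=
    fun x => ∑ i, fderiv ℝ F x (EuclideanSpace.single i 1) i with hD_def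
  have hDint0 : ∫ x, D x = 0 := hmo_div_int_zero F hFc1 hFsupp
  have hintD : Integrable D := by
    apply Continuous.integrable_of_hasCompactSupport
    · apply continuous_finset_sum
      intro i _
      exact (EuclideanSpace.proj (𝕜 := ℝ) i).continuous.comp
        ((ContinuousLinearMap.apply ℝ _ (EuclideanSpace.single i (1:ℝ))).continuous.comp
          (hFc1.continuous_fderiv one_ne_zero))
    · apply (hFsupp.fderiv ℝ).comp_left
        (g := fun L : EuclideanSpace ℝ (Fin n) →L[ℝ] EuclideanSpace ℝ (Fin n) =>
          ∑ i, L (EuclideanSpace.single i 1) i)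
      simp
  have hDT : ∀ x ∈ T, D x
      = 2 * u x * (inner ℝ (gradient u x) (‖x - c x‖⁻¹ • (x - c x)) : ℝ)
        + ((n:ℝ)-1) * ‖x - c x‖⁻¹ * u x ^ 2 := by
    intro x hx
    obtain ⟨Φ, hΦ, hsum⟩ := hmo_div_formula c u x
      ((hc.contDiffAt (hT.mem_nhds hx)).differentiableAt one_ne_zero)
      ((hu1.differentiable one_ne_zero) x) (hrad x hx).1 (hconst x hx)
    rw [hD_def]
    simp only [show fderiv ℝ F x = Φ from hΦ.fderiv]
    exact hsum
  have hDz : ∀ x, x ∉ T → D x = 0 := by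
    intro x hx
    have hx' : x ∉ tsupport u := fun h => hx (husub h)
    have hev : F =ᶠ[nhds x] (fun _ => (0 : EuclideanSpace ℝ (Fin n))) := by
      filter_upwards [((isClosed_tsupport u).isOpen_compl).mem_nhds hx'] with y hy
      simp [hF_def, image_eq_zero_of_notMem_tsupport hy]
    have : fderiv ℝ F x = 0 := by
      rw [hev.fderiv_eq]
      exact fderiv_const_apply _
    simp [hD_def, this]
  set ε : ℝ := ((n:ℝ)-1) / (2*ρ) with hε_def
  have hn1 : (1:ℝ) ≤ (n:ℝ) - 1 := by
    have : (2:ℝ) ≤ (n:ℝ) := by exact_mod_cast hn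
    linarith
  have hε : 0 < ε := div_pos (by linarith) (by linarith)
  have claim : ∀ x, ((n:ℝ)-1)/ρ * u x ^ 2 ≤ D x + ε * u x ^ 2 + ε⁻¹ * ‖gradient u x‖ ^ 2 := by
    intro x
    by_cases hx : x ∈ T
    · rw [hDT x hx]
      obtain ⟨hr0, hrρ⟩ := hrad x hx
      set g := ‖gradient u x‖ with hg_def
      have hg0 : 0 ≤ g := norm_nonneg _
      set s := (inner ℝ (gradient u x) (‖x - c x‖⁻¹ • (x - c x)) : ℝ) with hs_def
      have hηn : ‖(‖x - c x‖⁻¹ • (x - c x))‖ = 1 := by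
        rw [norm_smul, Real.norm_eq_abs, abs_of_pos (inv_pos.2 hr0)]
        field_simp
      have hinner : |s| ≤ g := by
        calc |s| ≤ ‖gradient u x‖ * ‖(‖x - c x‖⁻¹ • (x - c x))‖ := abs_real_inner_le_norm _ _
          _ = g := by rw [hηn, mul_one]
      have hr_mono : ((n:ℝ)-1)/ρ * u x ^ 2 ≤ ((n:ℝ)-1) * ‖x - c x‖⁻¹ * u x ^ 2 := by
        apply mul_le_mul_of_nonneg_right _ (sq_nonneg _)
        rw [div_eq_mul_inv]
        exact mul_le_mul_of_nonneg_left (inv_anti₀ hr0 hrρ) (by linarith)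
      have h1 : -(2 * |u x| * g) ≤ 2 * u x * s := by
        have := neg_abs_le (2 * u x * s)
        have h2 : |2 * u x * s| ≤ 2 * |u x| * g := by
          rw [abs_mul, abs_mul, abs_two]
          have : |u x| * |s| ≤ |u x| * g := mul_le_mul_of_nonneg_left hinner (abs_nonneg _)
          nlinarith [abs_nonneg (u x)]
        linarith
      have h2 : 2 * |u x| * g ≤ ε * u x ^ 2 + ε⁻¹ * g ^ 2 := by
        nlinarith [sq_nonneg (ε * |u x| - g), mul_inv_cancel₀ (ne_of_gt hε), sq_abs (u x), hε,
          mul_pos hε hε]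
      linarith
    · rw [huz x hx, hDz x hx, hgradz x (fun h => hx (husub h))]
      simp
  have hintu2 : Integrable (fun x => u x ^ 2) := by
    apply Continuous.integrable_of_hasCompactSupport ((hu.continuous).pow 2)
    apply husupp.mono
    intro x hx
    simp only [Function.mem_support] at hx ⊢
    intro h
    apply hx
    rw [Pi.pow_apply, h]
    ring
  have hintg2 : Integrable (fun x => ‖gradient u x‖ ^ 2) := by
    apply Continuous.integrable_of_hasCompactSupport ((hgrad_cont.norm).pow 2)
    apply husupp.mono'
    intro x hx
    simp only [Function.mem_support] at hx
    by_contra hxt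
    exact hx (by rw [Pi.pow_apply, hgradz x hxt]; simp)
  have hmono : ∫ x, ((n:ℝ)-1)/ρ * u x ^ 2
      ≤ ∫ x, (D x + ε * u x ^ 2 + ε⁻¹ * ‖gradient u x‖ ^ 2) := by
    apply integral_mono (hintu2.const_mul _) _ claim
    exact (hintD.add (hintu2.const_mul ε)).add (hintg2.const_mul ε⁻¹)
  have hsplit : ∫ x, (D x + ε * u x ^ 2 + ε⁻¹ * ‖gradient u x‖ ^ 2)
      = (∫ x, D x) + ε * (∫ x, u x ^ 2) + ε⁻¹ * (∫ x, ‖gradient u x‖ ^ 2) := by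
    rw [integral_add
        (show Integrable (fun x => D x + ε * u x ^ 2) volume from hintD.add (hintu2.const_mul ε))
        (show Integrable (fun x => ε⁻¹ * ‖gradient u x‖ ^ 2) volume from hintg2.const_mul ε⁻¹),
      integral_add hintD
        (show Integrable (fun x => ε * u x ^ 2) volume from hintu2.const_mul ε),
      integral_const_mul, integral_const_mul]
  rw [hsplit, hDint0, integral_const_mul] at hmono
  set A := ∫ x, u x ^ 2 with hA_def
  set Bg := ∫ x, ‖gradient u x‖ ^ 2 with hB_def
  have hTA : ∫ x in T, u x ^ 2 = A :=
    setIntegral_eq_integral_of_forall_compl_eq_zero (fun x hx => by rw [huz x hx]; ring)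
  have hTB : ∫ x in T, ‖gradient u x‖ ^ 2 = Bg :=
    setIntegral_eq_integral_of_forall_compl_eq_zero (fun x hx => by
      rw [hgradz x (fun h => hx (husub h))]; simp)
  rw [hTA, hTB]
  have hB0 : 0 ≤ Bg := integral_nonneg (fun x => sq_nonneg _)
  have hkey : ε * A ≤ ε⁻¹ * Bg := by
    have hrw : ((n:ℝ)-1)/ρ = 2 * ε := by
      rw [hε_def]
      field_simp
    rw [hrw] at hmono
    linarith
  have hεinv : ε⁻¹ = 2*ρ/((n:ℝ)-1) := by
    rw [hε_def, inv_div]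
  have hfin := mul_le_mul_of_nonneg_left hkey (by positivity : (0:ℝ) ≤ 2*ρ*((n:ℝ)-1))
  have hne1 : ((n:ℝ)-1) ≠ 0 := by linarith
  have hne2 : ρ ≠ 0 := ne_of_gt hρ
  have hl : 2*ρ*((n:ℝ)-1) * (ε * A) = ((n:ℝ)-1)^2 * A := by
    rw [hε_def]; field_simp
  have hr2 : 2*ρ*((n:ℝ)-1) * (ε⁻¹ * Bg) = 4*ρ^2*Bg := by
    rw [hεinv]; field_simp; ring
  rw [hl, hr2] at hfin
  exact hfin
end

section
/- Let T ⊆ ℝⁿ be open and let c : T → ℝⁿ be a C¹ map such that for every x ∈ T one has x ≠ c(x) and the derivative of c at x vanishes on the orthogonal complement of x − c(x), i.e. (Dc)ₓ(v) = 0 whenever ⟨v, x − c(x)⟩ = 0. Then the C¹ unit vector field η(x) = (x − c(x))/‖x − c(x)‖ satisfies div η(x) = (n−1)/‖x − c(x)‖ for every x ∈ T. -/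
open MeasureTheory

/-!
Write `u = x - c x` and `η = ‖w‖⁻¹ • w` with `w y = y - c y`. By the product rule,
`Dη = ‖u‖⁻¹ Dw + (D‖w‖⁻¹) ⊗ u`, so `div η = ‖u‖⁻¹ (tr Dw - ⟪u, Dw u⟫ / ‖u‖²)`.
Since `Dc` kills `u⊥`, it is the rank-one map `v ↦ (⟪u, v⟫ / ‖u‖²) • Dc u`, whose trace is
`⟪u, Dc u⟫ / ‖u‖²`. Hence `tr Dw = n - ⟪u, Dc u⟫ / ‖u‖²` and `⟪u, Dw u⟫ / ‖u‖² = 1 - ⟪u, Dc u⟫ / ‖u‖²`,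
and the two corrections cancel, leaving `(n - 1) / ‖u‖`.
-/

open LinearMap (trace)
open scoped RealInnerProductSpace

theorem HasFDerivAt.norm_inv {E F : Type*} [NormedAddCommGroup E] [InnerProductSpace ℝ E]
    [NormedAddCommGroup F] [NormedSpace ℝ F] {f : F → E} {f' : F →L[ℝ] E} {x : F}
    (hf : HasFDerivAt f f' x) (h0 : f x ≠ 0) :
    HasFDerivAt (fun y => ‖f y‖⁻¹) (-(‖f x‖ ^ 3)⁻¹ • (innerSL ℝ (f x)).comp f') x := by
  have hpos : 0 < ‖f x‖ := norm_pos_iff.mpr h0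
  have hnorm : HasFDerivAt (fun y => ‖f y‖) (‖f x‖⁻¹ • (innerSL ℝ (f x)).comp f') x := by
    have h := hf.norm_sq.sqrt (pow_pos hpos 2).ne'
    simp only [Real.sqrt_sq (norm_nonneg _)] at h
    refine h.congr_fderiv ?_
    ext v
    simp only [smul_apply, ContinuousLinearMap.comp_apply, coe_innerSL_apply, nsmul_eq_mul,
      Nat.cast_ofNat, smul_eq_mul]
    field_simp
  refine ((hasDerivAt_inv hpos.ne').comp_hasFDerivAt x hnorm).congr_fderiv ?_
  ext v
  simp only [neg_smul, neg_apply, smul_apply, ContinuousLinearMap.comp_apply, coe_innerSL_apply,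
    smul_eq_mul]
  field_simp

section

variable {E : Type*} [NormedAddCommGroup E] [InnerProductSpace ℝ E]

theorem LinearMap.map_eq_inner_smul_of_map_eq_zero {L : E →ₗ[ℝ] E} {u : E} (hu : u ≠ 0)
    (h : ∀ v, ⟪v, u⟫ = 0 → L v = 0) (v : E) : L v = (⟪u, v⟫ / ‖u‖ ^ 2) • L u := by
  have hu2 : ‖u‖ ^ 2 ≠ 0 := by positivity
  have hperp : ⟪v - (⟪u, v⟫ / ‖u‖ ^ 2) • u, u⟫ = 0 := by
    rw [inner_sub_left, real_inner_smul_left, real_inner_self_eq_norm_sq, real_inner_comm]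
    field_simp
    ring
  have := h _ hperp
  rwa [map_sub, map_smul, sub_eq_zero] at this

variable [FiniteDimensional ℝ E]

theorem LinearMap.trace_eq_inner_div_of_map_eq_zero {L : E →ₗ[ℝ] E} {u : E} (hu : u ≠ 0)
    (h : ∀ v, ⟪v, u⟫ = 0 → L v = 0) : trace ℝ E L = ⟪u, L u⟫ / ‖u‖ ^ 2 := by
  have hL : L = ((‖u‖ ^ 2)⁻¹ • innerₛₗ ℝ u).smulRight (L u) := by
    ext v
    rw [map_eq_inner_smul_of_map_eq_zero hu h v]
    simp [div_eq_inv_mul]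
  calc trace ℝ E L = trace ℝ E (((‖u‖ ^ 2)⁻¹ • innerₛₗ ℝ u).smulRight (L u)) := by rw [← hL]
    _ = ⟪u, L u⟫ / ‖u‖ ^ 2 := by simp [div_eq_inv_mul]

theorem ContinuousLinearMap.trace_smulRight (g : E →L[ℝ] ℝ) (v : E) :
    trace ℝ E (g.smulRight v : E →L[ℝ] E) = g v :=
  LinearMap.trace_smulRight (g : E →ₗ[ℝ] ℝ) v

theorem trace_fderiv_norm_inv_smul {f : E → E} {f' : E →L[ℝ] E} {x : E}
    (hf : HasFDerivAt f f' x) (h0 : f x ≠ 0) :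
    trace ℝ E (fderiv ℝ (fun y => ‖f y‖⁻¹ • f y) x) =
      ‖f x‖⁻¹ * (trace ℝ E f' - ⟪f x, f' (f x)⟫ / ‖f x‖ ^ 2) := by
  rw [((hf.norm_inv h0).fun_smul hf).fderiv]
  simp only [ContinuousLinearMap.toLinearMap_add, ContinuousLinearMap.toLinearMap_smul, map_add,
    map_smul, ContinuousLinearMap.trace_smulRight, smul_eq_mul, smul_apply,
    ContinuousLinearMap.comp_apply, coe_innerSL_apply]
  field_simp
  ring

end

/-- Divergence of the unit radial field of a family of spherical caps with moving centers:
if the center map `c` is constant along each cap, then the unit field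
`η x = (x - c x)/‖x - c x‖` has divergence `(n-1)/‖x - c x‖`. -/
theorem stmt10 {n : ℕ} (T : Set (EuclideanSpace ℝ (Fin n))) (hT : IsOpen T)
    (c : EuclideanSpace ℝ (Fin n) → EuclideanSpace ℝ (Fin n))
    (hc : ContDiffOn ℝ 1 c T)
    (hne : ∀ x ∈ T, x ≠ c x)
    (hconst : ∀ x ∈ T, ∀ v : EuclideanSpace ℝ (Fin n),
      (inner ℝ v (x - c x) : ℝ) = 0 → fderiv ℝ c x v = 0) :
    ∀ x ∈ T, divergence (fun y => ‖y - c y‖⁻¹ • (y - c y)) x = ((n : ℝ) - 1) / ‖x - c x‖ := by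
  intro x hx
  have hcx : HasFDerivAt c (fderiv ℝ c x) x :=
    ((hc x hx).contDiffAt (hT.mem_nhds hx)).differentiableAt one_ne_zero |>.hasFDerivAt
  have hu : x - c x ≠ 0 := sub_ne_zero.mpr (hne x hx)
  have htrace_dc := LinearMap.trace_eq_inner_div_of_map_eq_zero hu (hconst x hx)
  have hw : HasFDerivAt (fun y => y - c y) (.id ℝ _ - fderiv ℝ c x) x :=
    (hasFDerivAt_id x).sub hcx
  have htrace_id :
      trace ℝ _ (ContinuousLinearMap.id ℝ (EuclideanSpace ℝ (Fin n))).toLinearMap = n := by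
    simp
  rw [divergence, trace_fderiv_norm_inv_smul hw hu, ContinuousLinearMap.toLinearMap_sub, map_sub,
    htrace_id, htrace_dc, ContinuousLinearMap.coe_coe, sub_apply, ContinuousLinearMap.id_apply,
    inner_sub_right, real_inner_self_eq_norm_sq]
  field_simp
  ring
end
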